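/- arXiv:2509.24971 — 12 statements merged into one kernel-verified Lean document; each statement's English description precedes it below -/
import Mathlib

section
/- For every real number λ with 1 < λ < 2, there exists a strictly increasing λ-lacunary sequence n_1 < n_2 < n_3 < ⋯ of positive integers such that the sequence of ratios n_{i+1}/n_i converges to 2 as i → ∞, and such that every rational number q with 0 < q ≤ 2 is equal to ∑_{i∈S} 1/n_i for infinitely many distinct finite sets S ⊂ ℕ. -/
/-!
The sequence `seq L w` is a concatenation of geometric blocks
`lead k, 2 lead k, …, 2 ^ L k * lead k = top k` with `lead (k + 1) = lead k * w k`. Inside a block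
the ratio is `2`; across a boundary it is `w k / 2 ^ L k`. Taking `L k = c + k + k !` and for `w k`
the largest multiple of `k !` below `2 ^ (L k + 1)` puts that ratio in `[2 - 2 ^ (-(c + k)), 2)`,
which gives `λ`-lacunarity for large `c` and ratios tending to `2`.

All reciprocals of terms in blocks `≤ k` lie in `(1 / top k) ℕ`, and by induction on `k` every
`T / top k` with `T < 2 top k` is a subset sum of them: with `top (k + 1) = top k * B`, the
quotient of `T` by `B` is handled by the earlier blocks and the remainder by the binary digits
of block `k + 1`, whose reciprocals are `2 ^ t / top (k + 1)` for `t ≤ L (k + 1)`. Since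
`k ! ∣ top (k + 1)`, every `q ∈ (0, 2]` with denominator `≤ k` has such a representation, and it
can be made to use block `k + 1`; so different `k` give different sets.
-/

open Filter Finset
open scoped Nat

namespace BlockSeq

variable (L w : ℕ → ℕ)

def start : ℕ → ℕ
  | 0 => 0
  | k + 1 => start k + (L k + 1)

def blockOf (i : ℕ) : ℕ := Nat.findGreatest (fun k => start L k ≤ i) i

def lead : ℕ → ℕ
  | 0 => 1
  | k + 1 => lead k * w k

def seq (i : ℕ) : ℕ := lead w (blockOf L i) * 2 ^ (i - start L (blockOf L i))

def top (k : ℕ) : ℕ := lead w k * 2 ^ L k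

variable {L w}

lemma start_succ (k : ℕ) : start L (k + 1) = start L k + (L k + 1) := rfl

lemma start_mono : Monotone (start L) :=
  monotone_nat_of_le_succ fun _ => Nat.le_add_right _ _

lemma le_start (k : ℕ) : k ≤ start L k := by
  induction k with
  | zero => exact le_rfl
  | succ k ih => rw [start_succ]; omega

lemma le_blockOf {k i : ℕ} (h : start L k ≤ i) : k ≤ blockOf L i :=
  Nat.le_findGreatest ((le_start k).trans h) h

lemma start_blockOf_le (i : ℕ) : start L (blockOf L i) ≤ i :=
  Nat.findGreatest_spec (P := fun k => start L k ≤ i) (Nat.zero_le i) (Nat.zero_le i)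

lemma lt_start_blockOf_succ (i : ℕ) : i < start L (blockOf L i + 1) := by
  by_contra! h
  exact (le_blockOf h).not_gt (Nat.lt_succ_self _)

lemma blockOf_eq {k i : ℕ} (h₁ : start L k ≤ i) (h₂ : i < start L (k + 1)) :
    blockOf L i = k := by
  refine le_antisymm ?_ (le_blockOf h₁)
  by_contra! h
  exact h₂.not_ge ((start_mono h).trans (start_blockOf_le i))

lemma seq_start_add {k j : ℕ} (hj : j ≤ L k) :
    seq L w (start L k + j) = lead w k * 2 ^ j := by
  rw [seq, blockOf_eq (Nat.le_add_right _ _) (by rw [start_succ]; omega),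
    Nat.add_sub_cancel_left]

lemma exists_eq_start_add (i : ℕ) : ∃ k j, j ≤ L k ∧ i = start L k + j := by
  have h₁ := start_blockOf_le (L := L) i
  have h₂ := lt_start_blockOf_succ (L := L) i
  rw [start_succ] at h₂
  exact ⟨blockOf L i, i - start L (blockOf L i), by omega, by omega⟩

lemma tendsto_blockOf : Tendsto (blockOf L) atTop atTop :=
  tendsto_atTop.2 fun k => (eventually_ge_atTop (start L k)).mono fun _ => le_blockOf

lemma seq_succ_bounds {ρ : ℕ → ℝ} (hρ : ∀ k, ρ k * 2 ^ L k ≤ w k)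
    (hw : ∀ k, w k ≤ 2 ^ (L k + 1)) (i : ℕ) :
    ρ (blockOf L i) * seq L w i ≤ seq L w (i + 1) ∧
      (seq L w (i + 1) : ℝ) ≤ 2 * seq L w i := by
  obtain ⟨k, j, hj, rfl⟩ := exists_eq_start_add (L := L) i
  rw [blockOf_eq (Nat.le_add_right _ _) (by rw [start_succ]; omega)]
  have hlead : (0 : ℝ) ≤ lead w k := Nat.cast_nonneg _
  rcases hj.lt_or_eq with hj | rfl
  · have hρ2 : ρ k ≤ 2 := by
      have := (hρ k).trans (Nat.cast_le.2 (hw k))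
      push_cast at this
      rw [pow_succ] at this
      exact le_of_mul_le_mul_left (by linarith) (by positivity)
    rw [add_assoc, seq_start_add hj, seq_start_add hj.le, pow_succ]
    push_cast
    constructor
    · have := mul_nonneg hlead (pow_pos (two_pos (α := ℝ)) j).le
      nlinarith [mul_nonneg (sub_nonneg.2 hρ2) this]
    · linarith
  · rw [seq_start_add le_rfl, show start L k + L k + 1 = start L (k + 1) + 0 by
      rw [start_succ]; omega, seq_start_add (Nat.zero_le _)]
    have hlo := hρ k
    have hhi := (Nat.cast_le (α := ℝ)).2 (hw k)
    simp only [lead, pow_zero, mul_one, Nat.cast_mul, Nat.cast_pow, Nat.cast_ofNat,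
      pow_succ] at hlo hhi ⊢
    constructor <;> nlinarith

section Representation

variable (hw₀ : ∀ k, 0 < w k)
include hw₀

lemma lead_pos (k : ℕ) : 0 < lead w k := by
  induction k with
  | zero => exact Nat.one_pos
  | succ k ih => exact Nat.mul_pos ih (hw₀ k)

lemma seq_pos (i : ℕ) : 0 < seq L w i :=
  Nat.mul_pos (lead_pos hw₀ _) (Nat.two_pow_pos _)

lemma top_pos (k : ℕ) : 0 < top L w k :=
  Nat.mul_pos (lead_pos hw₀ _) (Nat.two_pow_pos _)

lemma one_div_seq_start_add {k j : ℕ} (hj : j ≤ L k) :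
    (1 : ℚ) / seq L w (start L k + j) = 2 ^ (L k - j) / top L w k := by
  have hlead : (lead w k : ℚ) ≠ 0 := by exact_mod_cast (lead_pos hw₀ k).ne'
  rw [seq_start_add hj, top, div_eq_div_iff (by push_cast; positivity) (by push_cast; positivity),
    ← Nat.sub_add_cancel hj]
  push_cast
  rw [Nat.add_sub_cancel, pow_add]
  ring

lemma exists_sum_eq_of_lt_two_pow (k : ℕ) {R : ℕ} (hR : R < 2 ^ (L k + 1)) :
    ∃ S : Finset ℕ, (∀ i ∈ S, start L k ≤ i ∧ i < start L (k + 1)) ∧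
      ∑ i ∈ S, (1 : ℚ) / seq L w i = R / top L w k := by
  set F := R.bitIndices.toFinset
  have hF : ∀ t ∈ F, t ≤ L k := fun t ht => by
    have := Nat.two_pow_le_of_mem_bitIndices (List.mem_toFinset.1 ht)
    have := Nat.pow_lt_pow_iff_right (a := 2) (by norm_num) |>.1 (this.trans_lt hR)
    omega
  refine ⟨F.image fun t => start L k + (L k - t), ?_, ?_⟩
  · simp only [mem_image, start_succ]
    rintro _ ⟨t, -, rfl⟩
    omega
  · rw [sum_image fun t ht t' ht' h => by have := hF t ht; have := hF t' ht'; omega]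
    rw [sum_congr rfl fun t ht => one_div_seq_start_add hw₀ (Nat.sub_le (L k) t),
      ← sum_div]
    congr 1
    rw [← Finset.sum_toFinset_bitIndices_two_pow R]
    push_cast
    exact sum_congr rfl fun t ht => by rw [Nat.sub_sub_self (hF t ht)]

variable (hL : Monotone L) (hw : ∀ k, w k < 2 ^ (L k + 1))
include hL hw

lemma exists_top_succ_eq_mul (k : ℕ) :
    ∃ B, 0 < B ∧ B < 2 ^ (L (k + 1) + 1) ∧ top L w (k + 1) = top L w k * B := by
  have hLk := hL (Nat.le_add_right k 1)
  refine ⟨w k * 2 ^ (L (k + 1) - L k), Nat.mul_pos (hw₀ k) (Nat.two_pow_pos _), ?_, ?_⟩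
  · calc w k * 2 ^ (L (k + 1) - L k) < 2 ^ (L k + 1) * 2 ^ (L (k + 1) - L k) :=
          Nat.mul_lt_mul_of_pos_right (hw k) (Nat.two_pow_pos _)
      _ = 2 ^ (L (k + 1) + 1) := by rw [← pow_add]; congr 1; omega
  · rw [top, top, lead, ← Nat.sub_add_cancel hLk, pow_add, Nat.add_sub_cancel]
    ring

/-- Splitting `T - 1 = T' B + (R - 1)` rather than `T = T' B + R` makes the remainder
`R ∈ [1, B]` nonzero, so block `k + 1` is used, and also covers `T = 2 top (k + 1)`. -/
lemma exists_sum_eq_of_pos_of_le (k : ℕ)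
    (ih : ∀ T < 2 * top L w k, ∃ S : Finset ℕ, (∀ i ∈ S, i < start L (k + 1)) ∧
      ∑ i ∈ S, (1 : ℚ) / seq L w i = T / top L w k)
    {T : ℕ} (hT₀ : 0 < T) (hT : T ≤ 2 * top L w (k + 1)) :
    ∃ S : Finset ℕ, (∀ i ∈ S, i < start L (k + 2)) ∧ (∃ i ∈ S, start L (k + 1) ≤ i) ∧
      ∑ i ∈ S, (1 : ℚ) / seq L w i = T / top L w (k + 1) := by
  obtain ⟨B, hB, hBlt, htop⟩ := exists_top_succ_eq_mul hw₀ hL hw k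
  have hdiv := Nat.div_add_mod' (T - 1) B
  have hmod := Nat.mod_lt (T - 1) hB
  obtain ⟨S₁, hS₁, hsum₁⟩ := ih ((T - 1) / B) <| by
    rw [Nat.div_lt_iff_lt_mul hB, mul_assoc, ← htop]
    omega
  obtain ⟨S₂, hS₂, hsum₂⟩ := exists_sum_eq_of_lt_two_pow hw₀ (k + 1)
    (R := (T - 1) % B + 1) ((Nat.succ_le_of_lt hmod).trans_lt hBlt)
  have htop₀ : (top L w k : ℚ) ≠ 0 := by exact_mod_cast (top_pos hw₀ k).ne'
  have hB₀ : (B : ℚ) ≠ 0 := by exact_mod_cast hB.ne'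
  refine ⟨S₁ ∪ S₂, ?_, ?_, ?_⟩
  · simp only [mem_union]
    rintro i (hi | hi)
    exacts [(hS₁ i hi).trans_le (start_mono (Nat.le_succ _)), (hS₂ i hi).2]
  · obtain ⟨i, hi⟩ : S₂.Nonempty := by
      rw [nonempty_iff_ne_empty]
      rintro rfl
      rw [sum_empty, eq_comm, div_eq_zero_iff] at hsum₂
      norm_cast at hsum₂
      simp [(top_pos hw₀ (k + 1)).ne'] at hsum₂
    exact ⟨i, mem_union_right _ hi, (hS₂ i hi).1⟩
  · rw [sum_union (disjoint_left.2 fun i hi₁ hi₂ => (hS₁ i hi₁).not_ge (hS₂ i hi₂).1),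
      hsum₁, hsum₂, htop]
    have hT' : (T : ℚ) = ((T - 1) / B : ℕ) * B + ((T - 1) % B + 1 : ℕ) := by
      norm_cast
      omega
    rw [hT']
    push_cast
    field_simp

lemma exists_sum_eq_of_lt (k : ℕ) :
    ∀ T < 2 * top L w k, ∃ S : Finset ℕ, (∀ i ∈ S, i < start L (k + 1)) ∧
      ∑ i ∈ S, (1 : ℚ) / seq L w i = T / top L w k := by
  induction k with
  | zero =>
    intro T hT
    obtain ⟨S, hS, hsum⟩ := exists_sum_eq_of_lt_two_pow hw₀ 0 (R := T) <| by
      simpa [top, lead, pow_succ, mul_comm] using hT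
    exact ⟨S, fun i hi => (hS i hi).2, hsum⟩
  | succ k ih =>
    intro T hT
    rcases T.eq_zero_or_pos with rfl | hT₀
    · exact ⟨∅, by simp, by simp⟩
    · obtain ⟨S, hS, -, hsum⟩ := exists_sum_eq_of_pos_of_le hw₀ hL hw k ih hT₀ hT.le
      exact ⟨S, hS, hsum⟩

lemma exists_sum_eq_rat (k : ℕ) {q : ℚ} (hq₀ : 0 < q) (hq₂ : q ≤ 2)
    (hden : q.den ∣ top L w (k + 1)) :
    ∃ S : Finset ℕ, (∃ i ∈ S, start L (k + 1) ≤ i) ∧ q = ∑ i ∈ S, (1 : ℚ) / seq L w i := by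
  obtain ⟨u, hu⟩ := hden
  obtain ⟨a, ha⟩ := Int.eq_ofNat_of_zero_le (Rat.num_nonneg.2 hq₀.le)
  have htop : (top L w (k + 1) : ℚ) ≠ 0 := by exact_mod_cast (top_pos hw₀ _).ne'
  have hq : q = (a * u : ℕ) / top L w (k + 1) := by
    rw [eq_div_iff htop, hu]
    push_cast
    rw [← mul_assoc, Rat.mul_den_eq_num, ha]
    rfl
  have hpos : 0 < a * u := by
    rw [hq] at hq₀
    exact_mod_cast (div_pos_iff_of_pos_right (by positivity)).1 hq₀
  have hle : a * u ≤ 2 * top L w (k + 1) := by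
    rw [hq, div_le_iff₀ (by positivity)] at hq₂
    exact_mod_cast hq₂
  obtain ⟨S, -, hS, hsum⟩ :=
    exists_sum_eq_of_pos_of_le hw₀ hL hw k (exists_sum_eq_of_lt hw₀ hL hw k) hpos hle
  exact ⟨S, hS, hsum ▸ hq⟩

end Representation

lemma tendsto_seq_ratio {ρ : ℕ → ℝ} (hρ : ∀ k, ρ k * 2 ^ L k ≤ w k)
    (hw : ∀ k, w k ≤ 2 ^ (L k + 1)) (hw₀ : ∀ k, 0 < w k) (hρ₂ : Tendsto ρ atTop (nhds 2)) :
    Tendsto (fun i => (seq L w (i + 1) : ℝ) / seq L w i) atTop (nhds 2) := by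
  refine tendsto_of_tendsto_of_tendsto_of_le_of_le (hρ₂.comp (tendsto_blockOf (L := L)))
    tendsto_const_nhds (fun i => ?_) (fun i => ?_)
  all_goals
    have hpos : (0 : ℝ) < seq L w i := by exact_mod_cast seq_pos hw₀ i
    have := seq_succ_bounds hρ hw i
  · exact (le_div_iff₀ hpos).2 this.1
  · exact (div_le_iff₀ hpos).2 this.2

end BlockSeq

namespace LacunaryRepr

open BlockSeq

def len (c k : ℕ) : ℕ := c + k + k !

def mult (c k : ℕ) : ℕ := k ! * ((2 ^ (len c k + 1) - 1) / k !)

variable (c : ℕ)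

lemma len_mono : Monotone (len c) := fun _ _ h => by
  have := Nat.factorial_le h
  simp only [len]
  omega

lemma mult_lt (k : ℕ) : mult c k < 2 ^ (len c k + 1) :=
  (Nat.mul_div_le (2 ^ (len c k + 1) - 1) k !).trans_lt
    (Nat.sub_lt (Nat.two_pow_pos _) Nat.one_pos)

lemma two_pow_le_mult_add (k : ℕ) : 2 ^ (len c k + 1) ≤ mult c k + k ! := by
  have := Nat.div_add_mod (2 ^ (len c k + 1) - 1) k !
  have := Nat.mod_lt (2 ^ (len c k + 1) - 1) (Nat.factorial_pos k)
  have := Nat.two_pow_pos (len c k + 1)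
  rw [mult]
  omega

lemma mult_pos (k : ℕ) : 0 < mult c k := by
  have h₁ := two_pow_le_mult_add c k
  have h₂ : k ! < 2 ^ (len c k + 1) :=
    Nat.lt_two_pow_self.trans_le (Nat.pow_le_pow_right two_pos (by simp only [len]; omega))
  omega

lemma mult_ge (k : ℕ) : (2 - (1 / 2 : ℝ) ^ (c + k)) * 2 ^ len c k ≤ mult c k := by
  have h : (2 : ℝ) ^ (len c k + 1) ≤ mult c k + k ! := by exact_mod_cast two_pow_le_mult_add c k
  have hfac : (k ! : ℝ) ≤ 2 ^ k ! := by exact_mod_cast Nat.lt_two_pow_self.le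
  have hsplit : (1 / 2 : ℝ) ^ (c + k) * 2 ^ len c k = 2 ^ k ! := by
    rw [len, pow_add _ (c + k), ← mul_assoc, ← mul_pow]
    norm_num
  rw [pow_succ] at h
  nlinarith

lemma factorial_dvd_top (k : ℕ) : k ! ∣ top (len c) (mult c) (k + 1) := by
  rw [top, lead, mult]
  exact ((dvd_mul_right _ _).mul_left _).mul_right _

lemma tendsto_two_sub_half_pow :
    Tendsto (fun k => 2 - (1 / 2 : ℝ) ^ (c + k)) atTop (nhds 2) := by
  have := (tendsto_pow_atTop_nhds_zero_of_lt_one (by norm_num : (0 : ℝ) ≤ 1 / 2)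
    (by norm_num)).comp (tendsto_add_atTop_nat c)
  simpa [Function.comp_def, add_comm] using (tendsto_const_nhds (x := (2 : ℝ))).sub this

lemma infinite_setOf_sum_eq {q : ℚ} (hq₀ : 0 < q) (hq₂ : q ≤ 2) :
    {S : Finset ℕ | q = ∑ i ∈ S, (1 : ℚ) / seq (len c) (mult c) i}.Infinite := by
  refine Set.Infinite.of_image (fun S => S.sup id) (Set.infinite_of_forall_exists_gt fun M => ?_)
  set k := max M q.den
  obtain ⟨S, ⟨i, hi, hstart⟩, hq⟩ := exists_sum_eq_rat (mult_pos c) (len_mono c) (mult_lt c) k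
    hq₀ hq₂ ((Nat.dvd_factorial q.den_pos (le_max_right _ _)).trans (factorial_dvd_top c k))
  refine ⟨S.sup id, ⟨S, hq, rfl⟩, ?_⟩
  calc M < k + 1 := Nat.lt_succ_of_le (le_max_left _ _)
    _ ≤ start (len c) (k + 1) := le_start _
    _ ≤ i := hstart
    _ ≤ S.sup id := le_sup (f := id) hi

end LacunaryRepr

open BlockSeq LacunaryRepr in
/-- For every real `λ` with `1 < λ < 2` there exists a strictly
increasing `λ`-lacunary sequence of positive integers whose consecutive ratios
tend to `2`, and such that every rational `q` with `0 < q ≤ 2` equals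
`∑_{i ∈ S} 1 / n i` for infinitely many distinct finite sets `S ⊂ ℕ`. -/
theorem stmt1 (lam : ℝ) (hlam1 : 1 < lam) (hlam2 : lam < 2) :
    ∃ n : ℕ → ℕ, StrictMono n ∧ (∀ i, 0 < n i) ∧
      (∀ i, lam * (n i : ℝ) ≤ (n (i + 1) : ℝ)) ∧
      Tendsto (fun i => (n (i + 1) : ℝ) / (n i : ℝ)) atTop (nhds 2) ∧
      (∀ q : ℚ, 0 < q → q ≤ 2 →
        {S : Finset ℕ | q = ∑ i ∈ S, (1 : ℚ) / (n i)}.Infinite) := by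
  obtain ⟨c, hc⟩ := exists_pow_lt_of_lt_one (sub_pos.2 hlam2) (by norm_num : (1 / 2 : ℝ) < 1)
  have hlac (i : ℕ) : lam * seq (len c) (mult c) i ≤ seq (len c) (mult c) (i + 1) := by
    have hbound := (seq_succ_bounds (mult_ge c) (fun k => (mult_lt c k).le) i).1
    have : (1 / 2 : ℝ) ^ (c + blockOf (len c) i) ≤ (1 / 2) ^ c :=
      pow_le_pow_of_le_one (by norm_num) (by norm_num) (Nat.le_add_right _ _)
    nlinarith [(seq (len c) (mult c) i).cast_nonneg (α := ℝ)]
  refine ⟨seq (len c) (mult c), strictMono_nat_of_lt_succ fun i => ?_, seq_pos (mult_pos c), hlac,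
    tendsto_seq_ratio (mult_ge c) (fun k => (mult_lt c k).le) (mult_pos c)
      (tendsto_two_sub_half_pow c), fun q hq₀ hq₂ => infinite_setOf_sum_eq c hq₀ hq₂⟩
  have hpos : (0 : ℝ) < seq (len c) (mult c) i := by exact_mod_cast seq_pos (mult_pos c) i
  exact_mod_cast (lt_mul_of_one_lt_left hpos hlam1).trans_le (hlac i)
end

section
/- If n_1 < n_2 < n_3 < ⋯ is a sequence of positive integers satisfying n_{i+1} ≥ 2·n_i for every index i, then there is no non-empty open interval (α, β) of real numbers such that every rational number q ∈ (α, β) can be written as a finite sum ∑_{i∈S} 1/n_i for some finite set S ⊂ ℕ. -/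
/-!
For a 2-lacunary sequence, a sum of `1 / n i` over indices `> k` is at most `2 / n (k + 1)`,
while two different sums over indices `≤ k` are at least `1 / n k` apart. So if
`n (k + 1) > 2 * n k`, no sum of reciprocals lies strictly between `σ + 2 / n (k + 1)` and
`σ + 1 / n k`, for any sum `σ` over indices `≤ k`; an interval of such sums therefore forces
`n (k + 1) = 2 * n k` from some point on. Then all these sums lie in `(1 / (L * 2 ^ M)) ℤ` for a
fixed `L`, and the difference `1 / p` of two sums in the interval, `p` a large prime, cannot.
-/

open Finset

/-- The set `P((1 / n_i)_i)` of the informal statement. -/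
def reciprocalSums (n : ℕ → ℕ) : Set ℚ :=
  {q | ∃ S : Finset ℕ, q = ∑ i ∈ S, (1 : ℚ) / n i}

namespace Lacunary

variable {n : ℕ → ℕ}

lemma two_div_le_one_div (hpos : ∀ i, 0 < n i) (hlac : ∀ i, 2 * n i ≤ n (i + 1)) (i : ℕ) :
    (2 : ℚ) / n (i + 1) ≤ 1 / n i := by
  have hi : (0 : ℚ) < n i := by exact_mod_cast hpos i
  have hi2 : (2 * n i : ℚ) ≤ n (i + 1) := by exact_mod_cast hlac i
  rw [div_le_div_iff₀ (by linarith) hi]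
  linarith

lemma sum_Ioc_one_div_le (hpos : ∀ i, 0 < n i) (hlac : ∀ i, 2 * n i ≤ n (i + 1))
    {j k : ℕ} (hjk : j ≤ k) : ∑ i ∈ Ioc j k, (1 : ℚ) / n i ≤ 1 / n j - 1 / n k := by
  induction k, hjk using Nat.le_induction with
  | base => simp
  | succ k hjk ih =>
    rw [sum_Ioc_succ_top hjk]
    have : (2 : ℚ) / n (k + 1) = 1 / n (k + 1) + 1 / n (k + 1) := by ring
    linarith [two_div_le_one_div hpos hlac k]

lemma sum_one_div_le_two_div (hpos : ∀ i, 0 < n i) (hlac : ∀ i, 2 * n i ≤ n (i + 1))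
    {S : Finset ℕ} {m : ℕ} (hS : ∀ i ∈ S, m ≤ i) : ∑ i ∈ S, (1 : ℚ) / n i ≤ 2 / n m := by
  obtain ⟨M, hM⟩ := S.bddAbove
  have hmM : m ≤ max m M := le_max_left m M
  have hSM : S ⊆ Icc m (max m M) := fun i hi => mem_Icc.2 ⟨hS i hi, le_max_of_le_right (hM hi)⟩
  calc ∑ i ∈ S, (1 : ℚ) / n i ≤ ∑ i ∈ Icc m (max m M), (1 : ℚ) / n i := by gcongr
    _ = ∑ i ∈ Ioc m (max m M), (1 : ℚ) / n i + 1 / n m := (sum_Ioc_add_eq_sum_Icc hmM).symm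
    _ ≤ 2 / n m := by
      have : (0 : ℚ) ≤ 1 / n (max m M) := by positivity
      have : (2 : ℚ) / n m = 1 / n m + 1 / n m := by ring
      linarith [sum_Ioc_one_div_le hpos hlac hmM]

lemma sum_le_sum_filter_add_two_div (hpos : ∀ i, 0 < n i) (hlac : ∀ i, 2 * n i ≤ n (i + 1))
    (S : Finset ℕ) (k : ℕ) :
    ∑ i ∈ S, (1 : ℚ) / n i ≤ ∑ i ∈ S with i ≤ k, (1 : ℚ) / n i + 2 / n (k + 1) := by
  rw [← sum_filter_add_sum_filter_not S (· ≤ k)]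
  gcongr
  exact sum_one_div_le_two_div hpos hlac fun i hi => by simp at hi; omega

lemma sum_add_one_div_le_of_subset_Ioc (hpos : ∀ i, 0 < n i) (hlac : ∀ i, 2 * n i ≤ n (i + 1))
    {A B : Finset ℕ} {j k : ℕ} (hjk : j ≤ k) (hj : j ∈ A) (hB : B ⊆ Ioc j k) :
    ∑ i ∈ B, (1 : ℚ) / n i + 1 / n k ≤ ∑ i ∈ A, (1 : ℚ) / n i :=
  calc ∑ i ∈ B, (1 : ℚ) / n i + 1 / n k
      ≤ ∑ i ∈ Ioc j k, (1 : ℚ) / n i + 1 / n k := by gcongr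
    _ ≤ 1 / n j := by linarith [sum_Ioc_one_div_le hpos hlac hjk]
    _ ≤ ∑ i ∈ A, (1 : ℚ) / n i :=
      single_le_sum (f := fun i => (1 : ℚ) / n i) (fun _ _ => by positivity) hj

lemma sum_add_one_div_le_of_lt (hpos : ∀ i, 0 < n i) (hlac : ∀ i, 2 * n i ≤ n (i + 1))
    {S T : Finset ℕ} {k : ℕ} (hS : ∀ i ∈ S, i ≤ k) (hT : ∀ i ∈ T, i ≤ k)
    (h : ∑ i ∈ T, (1 : ℚ) / n i < ∑ i ∈ S, (1 : ℚ) / n i) :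
    ∑ i ∈ T, (1 : ℚ) / n i + 1 / n k ≤ ∑ i ∈ S, (1 : ℚ) / n i := by
  have hdiff := sum_sdiff_sub_sum_sdiff (s₁ := T) (s₂ := S) (f := fun i => (1 : ℚ) / n i)
  suffices ∑ i ∈ T \ S, (1 : ℚ) / n i + 1 / n k ≤ ∑ i ∈ S \ T, (1 : ℚ) / n i by linarith
  have hne : (S \ T ∪ T \ S).Nonempty := by
    by_contra! hempty
    simp only [union_eq_empty] at hempty
    simp only [hempty, sum_empty] at hdiff
    linarith
  -- The smallest index where `S` and `T` differ decides which sum is larger.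
  set j := (S \ T ∪ T \ S).min' hne
  have hsub {A B : Finset ℕ} (hB : ∀ i ∈ B, i ≤ k) (hjA : j ∈ A \ B)
      (hmin : ∀ i ∈ B \ A, j ≤ i) : B \ A ⊆ Ioc j k := fun i hi =>
    mem_Ioc.2 ⟨(hmin i hi).lt_of_ne (by rintro rfl; exact (mem_sdiff.1 hi).2 (mem_sdiff.1 hjA).1),
      hB i (mem_sdiff.1 hi).1⟩
  rcases mem_union.1 (min'_mem _ hne) with hjS | hjT
  · exact sum_add_one_div_le_of_subset_Ioc hpos hlac (hS j (mem_sdiff.1 hjS).1) hjS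
      (hsub hT hjS fun i hi => min'_le _ _ (mem_union_right _ hi))
  · have := sum_add_one_div_le_of_subset_Ioc hpos hlac (hT j (mem_sdiff.1 hjT).1) hjT
      (hsub hS hjT fun i hi => min'_le _ _ (mem_union_left _ hi))
    have : (0 : ℚ) < 1 / n k := by have := hpos k; positivity
    linarith

lemma notMem_reciprocalSums_of_lt_of_lt (hpos : ∀ i, 0 < n i) (hlac : ∀ i, 2 * n i ≤ n (i + 1))
    {H : Finset ℕ} {k : ℕ} {q : ℚ} (hH : ∀ i ∈ H, i ≤ k)
    (hlo : ∑ i ∈ H, (1 : ℚ) / n i + 2 / n (k + 1) < q)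
    (hhi : q < ∑ i ∈ H, (1 : ℚ) / n i + 1 / n k) :
    q ∉ reciprocalSums n := by
  rintro ⟨T, rfl⟩
  have hhead : ∑ i ∈ T with i ≤ k, (1 : ℚ) / n i ≤ ∑ i ∈ T, (1 : ℚ) / n i :=
    sum_le_sum_of_subset_of_nonneg (filter_subset _ _) fun _ _ _ => by positivity
  have htail := sum_le_sum_filter_add_two_div hpos hlac T k
  have := sum_add_one_div_le_of_lt (S := {i ∈ T | i ≤ k}) hpos hlac
    (fun i hi => (mem_filter.1 hi).2) hH (by linarith)
  linarith

lemma eq_two_mul_of_Ico_subset (hpos : ∀ i, 0 < n i) (hlac : ∀ i, 2 * n i ≤ n (i + 1))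
    {a : ℚ} {k : ℕ} (h : Set.Ico a (a + 1 / n k) ⊆ reciprocalSums n) :
    n (k + 1) = 2 * n k := by
  have hk : (0 : ℚ) < n k := by exact_mod_cast hpos k
  refine le_antisymm ?_ (hlac k)
  by_contra! hgt
  have hlt : (2 : ℚ) / n (k + 1) < 1 / n k := by
    rw [div_lt_div_iff₀ (by exact_mod_cast hpos (k + 1)) hk]
    exact_mod_cast (by omega : 2 * n k < 1 * n (k + 1))
  obtain ⟨S, rfl⟩ := h ⟨le_rfl, by simpa using hk⟩
  have hσ : ∑ i ∈ S with i ≤ k, (1 : ℚ) / n i ≤ ∑ i ∈ S, (1 : ℚ) / n i :=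
    sum_le_sum_of_subset_of_nonneg (filter_subset _ _) fun _ _ _ => by positivity
  have ha := sum_le_sum_filter_add_two_div hpos hlac S k
  obtain ⟨q, hlo, hhi⟩ :=
    exists_between (add_lt_add_right hlt (∑ i ∈ S with i ≤ k, (1 : ℚ) / n i))
  exact notMem_reciprocalSums_of_lt_of_lt hpos hlac (fun i hi => (mem_filter.1 hi).2) hlo hhi
    (h ⟨by linarith, by linarith⟩)

lemma dvd_prod_range_mul_two_pow {k : ℕ} (hk : ∀ i ≥ k, n (i + 1) = 2 * n i) (i : ℕ) :
    n i ∣ (∏ j ∈ range (k + 1), n j) * 2 ^ i := by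
  induction i with
  | zero => exact (dvd_prod_of_mem n (by simp)).mul_right _
  | succ i ih =>
    rcases le_or_gt k i with hki | hik
    · rw [hk i hki, pow_succ, ← mul_assoc, mul_comm 2]
      exact mul_dvd_mul_right ih 2
    · exact (dvd_prod_of_mem n (mem_range.2 (by omega))).mul_right _

lemma sum_one_div_mul_eq_natCast {S : Finset ℕ} {D : ℕ} (hS : ∀ i ∈ S, n i ∣ D) :
    (∑ i ∈ S, (1 : ℚ) / n i) * D = ((∑ i ∈ S, D / n i : ℕ) : ℚ) := by
  push_cast [sum_mul]
  refine sum_congr rfl fun i hi => ?_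
  rw [Nat.cast_div_charZero (hS i hi)]
  ring

theorem not_Ico_subset_reciprocalSums (hmono : StrictMono n) (hpos : ∀ i, 0 < n i)
    (hlac : ∀ i, 2 * n i ≤ n (i + 1)) {a b : ℚ} (hab : a < b) :
    ¬ Set.Ico a b ⊆ reciprocalSums n := by
  intro hsub
  obtain ⟨k, hk⟩ := exists_nat_one_div_lt (sub_pos.2 hab)
  have hsmall {m : ℕ} (hm : k < m) : a + 1 / m < b := by
    have : (1 : ℚ) / m ≤ 1 / (k + 1) :=
      one_div_le_one_div_of_le (by positivity) (by exact_mod_cast hm)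
    linarith
  have hdouble : ∀ i ≥ k + 1, n (i + 1) = 2 * n i := fun i hi =>
    eq_two_mul_of_Ico_subset hpos hlac
      ((Set.Ico_subset_Ico_right (hsmall (hi.trans (hmono.id_le i))).le).trans hsub)
  set L := ∏ j ∈ range (k + 2), n j
  have hL : 0 < L := prod_pos fun j _ => hpos j
  obtain ⟨p, hpL, hp⟩ := Nat.exists_infinite_primes (L + k + 3)
  obtain ⟨S, hS⟩ := hsub ⟨le_rfl, hab⟩
  obtain ⟨T, hT⟩ := hsub ⟨le_add_of_nonneg_right (by positivity), hsmall (m := p) (by omega)⟩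
  obtain ⟨M, hM⟩ := (S ∪ T).bddAbove
  set D := L * 2 ^ M
  have hdvd : ∀ i ∈ S ∪ T, n i ∣ D := fun i hi =>
    (dvd_prod_range_mul_two_pow hdouble i).trans (mul_dvd_mul_left L (pow_dvd_pow 2 (hM hi)))
  -- Both `a` and `a + 1 / p` lie in `(1 / D) ℤ`, hence so does `1 / p`.
  have hx := hS ▸ sum_one_div_mul_eq_natCast fun i hi => hdvd i (mem_union_left T hi)
  have hy := hT ▸ sum_one_div_mul_eq_natCast fun i hi => hdvd i (mem_union_right S hi)
  have hpD : p ∣ D := by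
    have hp0 : (p : ℚ) ≠ 0 := by exact_mod_cast hp.ne_zero
    have hQ : (D : ℚ) = p * ((∑ i ∈ T, D / n i : ℕ) - (∑ i ∈ S, D / n i : ℕ) : ℤ) := by
      rw [Int.cast_sub, Int.cast_natCast, Int.cast_natCast, ← hx, ← hy]
      field_simp
      ring
    exact Int.natCast_dvd_natCast.1 ⟨_, by exact_mod_cast hQ⟩
  rcases hp.dvd_mul.1 hpD with h | h
  · exact absurd (Nat.le_of_dvd hL h) (by omega)
  · exact absurd (Nat.le_of_dvd two_pos (hp.dvd_of_dvd_pow h)) (by omega)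

end Lacunary

/-- If `n₁ < n₂ < ⋯` is a sequence of positive integers with
`n (i+1) ≥ 2 * n i` for every `i`, then there is no non-empty open interval
`(α, β)` such that every rational in `(α, β)` is a finite sum of reciprocals
`∑_{i ∈ S} 1 / n i`. -/
theorem stmt2 (n : ℕ → ℕ) (hmono : StrictMono n) (hpos : ∀ i, 0 < n i)
    (hlac : ∀ i, 2 * n i ≤ n (i + 1)) :
    ¬ ∃ α β : ℝ, α < β ∧
      ∀ q : ℚ, α < (q : ℝ) → (q : ℝ) < β →
        ∃ S : Finset ℕ, q = ∑ i ∈ S, (1 : ℚ) / (n i) := by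
  rintro ⟨α, β, hαβ, hrep⟩
  obtain ⟨a, hαa, haβ⟩ := exists_rat_btwn hαβ
  obtain ⟨b, hab, hbβ⟩ := exists_rat_btwn haβ
  exact Lacunary.not_Ico_subset_reciprocalSums hmono hpos hlac (by exact_mod_cast hab)
    fun q hq => hrep q (hαa.trans_le (by exact_mod_cast hq.1))
      ((by exact_mod_cast hq.2 : (q : ℝ) < b).trans hbβ)
end

section
/- Let λ be a real number with 1 < λ < 2, and define the integer sequence (a_i)_{i=1}^∞ by a_1 = 1 and a_{i+1} = ⌈λ·a_i⌉ for i ≥ 1. If (n_i)_{i=1}^∞ is any λ-lacunary strictly increasing sequence of positive integers and (α, β) is a non-empty open interval such that every rational number in (α, β) is a finite sum ∑_{i∈S} 1/n_i over some finite S ⊂ ℕ, then β − α ≤ ∑_{i=1}^∞ 1/a_i. -/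
/-!
The sequence `a` is the slowest `λ`-lacunary sequence of integers starting at `1`, so every
`λ`-lacunary sequence of positive integers dominates it termwise: `a i ≤ n i`. Hence every finite
sum `∑_{i ∈ S} 1/n_i` lies in `[0, ∑ 1/a_i]`. Since the rationals of `(α, β)` are dense in it, the
whole interval lies in `[0, ∑ 1/a_i]`.
-/

open Set Finset

lemma pow_le_of_ceil_mul_recursion {lam : ℝ} (hlam : 0 ≤ lam) {a : ℕ → ℕ} (ha0 : a 0 = 1)
    (ha : ∀ i, a (i + 1) = ⌈lam * (a i : ℝ)⌉₊) (i : ℕ) : lam ^ i ≤ (a i : ℝ) := by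
  induction i with
  | zero => simp [ha0]
  | succ i ih =>
    calc lam ^ (i + 1) = lam * lam ^ i := pow_succ' lam i
      _ ≤ lam * (a i : ℝ) := mul_le_mul_of_nonneg_left ih hlam
      _ ≤ (a (i + 1) : ℝ) := ha i ▸ Nat.le_ceil _

lemma le_of_ceil_mul_recursion_of_lacunary {lam : ℝ} (hlam : 0 ≤ lam) {a n : ℕ → ℕ}
    (ha : ∀ i, a (i + 1) = ⌈lam * (a i : ℝ)⌉₊) (hlac : ∀ i, lam * (n i : ℝ) ≤ (n (i + 1) : ℝ))
    (h0 : a 0 ≤ n 0) (i : ℕ) : a i ≤ n i := by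
  induction i with
  | zero => exact h0
  | succ i ih =>
    rw [ha i, Nat.ceil_le]
    calc lam * (a i : ℝ) ≤ lam * (n i : ℝ) := by gcongr
      _ ≤ (n (i + 1) : ℝ) := hlac i

lemma summable_one_div_of_pow_le {lam : ℝ} (hlam : 1 < lam) {a : ℕ → ℝ}
    (ha : ∀ i, lam ^ i ≤ a i) : Summable fun i => 1 / a i := by
  have hlam0 : 0 < lam := zero_lt_one.trans hlam
  refine (summable_geometric_of_lt_one (by positivity) ((div_lt_one hlam0).2 hlam)).of_nonneg_of_le
    (fun i => (one_div_pos.2 <| (pow_pos hlam0 i).trans_le (ha i)).le) fun i => ?_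
  rw [div_pow, one_pow]
  exact one_div_le_one_div_of_le (pow_pos hlam0 i) (ha i)

lemma Finset.sum_one_div_le_tsum_one_div {a n : ℕ → ℝ} (hapos : ∀ i, 0 < a i)
    (han : ∀ i, a i ≤ n i) (hsum : Summable fun i => 1 / a i) (S : Finset ℕ) :
    ∑ i ∈ S, 1 / n i ≤ ∑' i, 1 / a i :=
  calc ∑ i ∈ S, 1 / n i ≤ ∑ i ∈ S, 1 / a i :=
        sum_le_sum fun i _ => one_div_le_one_div_of_le (hapos i) (han i)
    _ ≤ ∑' i, 1 / a i := hsum.sum_le_tsum S fun i _ => (one_div_pos.2 (hapos i)).le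

lemma Ioo_subset_of_forall_rat_mem {α β : ℝ} {C : Set ℝ} (hC : IsClosed C)
    (h : ∀ q : ℚ, (q : ℝ) ∈ Ioo α β → (q : ℝ) ∈ C) : Ioo α β ⊆ C :=
  (Rat.denseRange_cast.open_subset_closure_inter isOpen_Ioo).trans <|
    closure_minimal (by rintro _ ⟨hx, q, rfl⟩; exact h q hx) hC

theorem stmt3_general (lam : ℝ) (hlam1 : 1 < lam)
    (a : ℕ → ℕ) (ha0 : a 0 = 1) (ha : ∀ i, a (i + 1) = ⌈lam * (a i : ℝ)⌉₊)
    (n : ℕ → ℕ) (hpos : ∀ i, 0 < n i)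
    (hlac : ∀ i, lam * (n i : ℝ) ≤ (n (i + 1) : ℝ))
    (α β : ℝ) (hαβ : α < β)
    (hrep : ∀ q : ℚ, α < (q : ℝ) → (q : ℝ) < β →
      ∃ S : Finset ℕ, q = ∑ i ∈ S, (1 : ℚ) / (n i)) :
    β - α ≤ ∑' i, (1 : ℝ) / (a i) := by
  have hlam0 : 0 ≤ lam := zero_le_one.trans hlam1.le
  have hage := pow_le_of_ceil_mul_recursion hlam0 ha0 ha
  have hapos i : (0 : ℝ) < a i := (pow_pos (zero_lt_one.trans hlam1) i).trans_le (hage i)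
  have han i : (a i : ℝ) ≤ n i :=
    Nat.cast_le.2 <| le_of_ceil_mul_recursion_of_lacunary hlam0 ha hlac (ha0 ▸ hpos 0) i
  have hsub : Ioo α β ⊆ Icc 0 (∑' i, (1 : ℝ) / (a i)) := by
    refine Ioo_subset_of_forall_rat_mem isClosed_Icc fun q hq => ?_
    obtain ⟨S, rfl⟩ := hrep q hq.1 hq.2
    push_cast
    exact ⟨sum_nonneg fun i _ => by positivity,
      sum_one_div_le_tsum_one_div hapos han (summable_one_div_of_pow_le hlam1 hage) S⟩
  obtain ⟨hα, hβ⟩ := (Set.Icc_subset_Icc_iff hαβ.le).1 <|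
    closure_Ioo hαβ.ne ▸ closure_minimal hsub isClosed_Icc
  linarith

/-- Let `1 < λ < 2` and let `a₁ = 1`, `a_{i+1} = ⌈λ a_i⌉`
(indexed here from `0`, so `a 0 = 1`). If `(n_i)` is a `λ`-lacunary strictly
increasing sequence of positive integers and `(α, β)` is a non-empty open
interval all of whose rationals are finite sums `∑_{i ∈ S} 1 / n i`, then
`β - α ≤ ∑_{i} 1 / a_i`. -/
theorem stmt3 (lam : ℝ) (hlam1 : 1 < lam) (hlam2 : lam < 2)
    (a : ℕ → ℕ) (ha0 : a 0 = 1) (ha : ∀ i, a (i + 1) = ⌈lam * (a i : ℝ)⌉₊)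
    (n : ℕ → ℕ) (hmono : StrictMono n) (hpos : ∀ i, 0 < n i)
    (hlac : ∀ i, lam * (n i : ℝ) ≤ (n (i + 1) : ℝ))
    (α β : ℝ) (hαβ : α < β)
    (hrep : ∀ q : ℚ, α < (q : ℝ) → (q : ℝ) < β →
      ∃ S : Finset ℕ, q = ∑ i ∈ S, (1 : ℚ) / (n i)) :
    β - α ≤ ∑' i, (1 : ℝ) / (a i) :=
  stmt3_general lam hlam1 a ha0 ha n hpos hlac α β hαβ hrep
end

section
/- For every real Λ ≥ 2 and every real λ with 1 < λ < Λ/(Λ−1), there exists a λ-lacunary strictly increasing sequence of positive integers (n_i)_{i=1}^∞ such that n_{i+1} > Λ·n_i holds for infinitely many indices i, and every rational number q with 0 ≤ q < ∑_{i=1}^∞ 1/n_i can be written as a finite sum ∑_{i∈S} 1/n_i over some finite S ⊂ ℕ. -/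
/-!
The sequence is built in stages. Stage `k` starts at `t k`, doubles `runLength k` times, jumps by
the factor `w k / 2 ^ (k + c) > Λ`, and climbs back in `S` steps of ratio `p / 2 ^ a`, chosen in
`(λ, Λ / (Λ - 1))`, to `t (k + 1)`. So every ratio is at least `λ`, and every ratio other than a
jump is at most `2`.

A rational `q` is expanded by the greedy algorithm. Once the remainder after term `i` is below
`1 / n i`, this stays true across ratios at most `2`. Across a jump it may fail, but as
`Λ (1 - 2 ^ a / p) < 1`, the reciprocals of the `S + 1` terms after a jump add up to more than the
reciprocal of the jump term, so one of them is skipped and the invariant is restored before the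
next jump; a first skip exists because `q < ∑ 1 / n i`. Finally, at the jump term
`2 ^ runLength k * t k` of a stage with `q.den ∣ k ! ∣ t k`, all earlier terms divide it, so the
remainder is a multiple of its reciprocal smaller than its reciprocal, that is, zero.
-/

open Finset
open scoped Nat

namespace RationalSubsums

section Greedy

variable (n : ℕ → ℕ) (q : ℚ)

def greedyRem : ℕ → ℚ
  | 0 => q
  | i + 1 => if 1 / (n i : ℚ) ≤ greedyRem i then greedyRem i - 1 / n i else greedyRem i

def greedyChosen (j : ℕ) : Finset ℕ :=
  (range j).filter fun i => 1 / (n i : ℚ) ≤ greedyRem n q i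

variable {n q}

theorem greedyRem_succ (i : ℕ) : greedyRem n q (i + 1) =
    if 1 / (n i : ℚ) ≤ greedyRem n q i then greedyRem n q i - 1 / n i else greedyRem n q i :=
  rfl

theorem greedyRem_nonneg (hq : 0 ≤ q) : ∀ i, 0 ≤ greedyRem n q i
  | 0 => hq
  | i + 1 => by
    have := greedyRem_nonneg hq i
    rw [greedyRem_succ]
    split_ifs with h <;> linarith

theorem greedyRem_add_sum_chosen (j : ℕ) :
    greedyRem n q j + ∑ i ∈ greedyChosen n q j, 1 / (n i : ℚ) = q := by
  induction j with
  | zero => simp [greedyRem, greedyChosen]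
  | succ j ih =>
    rw [greedyChosen, range_add_one, filter_insert, ← greedyChosen, greedyRem_succ]
    split_ifs with h
    · rw [sum_insert fun hj => by simp [greedyChosen] at hj]
      linarith
    · exact ih

theorem greedyRem_succ_lt_of_not_le {i : ℕ} (h : ¬ 1 / (n i : ℚ) ≤ greedyRem n q i) :
    greedyRem n q (i + 1) < 1 / n i := by
  rw [greedyRem_succ, if_neg h]
  exact not_le.mp h

theorem greedyRem_succ_succ_lt {i : ℕ} (hn : ∀ i, 0 < n i) (h2 : n (i + 1) ≤ 2 * n i)
    (h : greedyRem n q (i + 1) < 1 / n i) : greedyRem n q (i + 2) < 1 / n (i + 1) := by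
  have hle : 1 / (n i : ℚ) ≤ 2 / n (i + 1) := by
    rw [div_le_div_iff₀ (by exact_mod_cast hn i) (by exact_mod_cast hn (i + 1))]
    exact_mod_cast (one_mul (n (i + 1))).le.trans h2
  have hhalf : (2 : ℚ) / n (i + 1) - 1 / n (i + 1) = 1 / n (i + 1) := by ring
  rw [greedyRem_succ]
  split_ifs with htake
  · linarith
  · exact not_le.mp htake

theorem greedyRem_lt_of_le_two_mul (hn : ∀ i, 0 < n i) {i j : ℕ} (hij : i ≤ j)
    (h2 : ∀ m, i ≤ m → m < j → n (m + 1) ≤ 2 * n m) (h : greedyRem n q (i + 1) < 1 / n i) :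
    greedyRem n q (j + 1) < 1 / n j := by
  induction j, hij using Nat.le_induction with
  | base => exact h
  | succ j hij ih =>
    exact greedyRem_succ_succ_lt hn (h2 j hij j.lt_succ_self)
      (ih fun m him hmj => h2 m him (by omega))

theorem greedyRem_add_eq_sub_sum (x : ℕ) {m : ℕ}
    (htake : ∀ r < m, 1 / (n (x + r) : ℚ) ≤ greedyRem n q (x + r)) :
    greedyRem n q (x + m) = greedyRem n q x - ∑ r ∈ range m, 1 / (n (x + r) : ℚ) := by
  induction m with
  | zero => simp
  | succ m ih =>
    rw [← add_assoc, greedyRem_succ, if_pos (htake m m.lt_succ_self),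
      ih fun r hr => htake r (by omega), sum_range_succ]
    ring

theorem exists_not_le_of_lt_sum (hq : 0 ≤ q) {x m : ℕ}
    (h : greedyRem n q x < ∑ r ∈ range m, 1 / (n (x + r) : ℚ)) :
    ∃ r < m, ¬ 1 / (n (x + r) : ℚ) ≤ greedyRem n q (x + r) := by
  by_contra! htake
  have := greedyRem_add_eq_sub_sum x htake
  linarith [greedyRem_nonneg (n := n) hq (x + m)]

theorem exists_not_le_of_lt_tsum (hq : 0 ≤ q) (h : (q : ℝ) < ∑' i, 1 / (n i : ℝ)) :
    ∃ i, ¬ 1 / (n i : ℚ) ≤ greedyRem n q i := by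
  by_contra! htake
  refine h.not_ge (Real.tsum_le_of_sum_range_le (fun i => by positivity) fun j => ?_)
  have hsum := greedyRem_add_sum_chosen (n := n) (q := q) j
  rw [greedyChosen, filter_true_of_mem fun i _ => htake i] at hsum
  have : ∑ i ∈ range j, 1 / (n i : ℚ) ≤ q := by linarith [greedyRem_nonneg (n := n) hq j]
  have := (Rat.cast_le (K := ℝ)).mpr this
  push_cast at this
  exact this

theorem exists_greedyRem_mul_eq_intCast (hn : ∀ i, 0 < n i) {N : ℕ} (hN : q.den ∣ N) :
    ∀ j, (∀ i < j, n i ∣ N) → ∃ z : ℤ, greedyRem n q j * N = z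
  | 0, _ => by
    obtain ⟨m, rfl⟩ := hN
    refine ⟨q.num * m, ?_⟩
    rw [greedyRem, Nat.cast_mul, ← mul_assoc, Rat.mul_den_eq_num]
    push_cast
    rfl
  | j + 1, hdvd => by
    obtain ⟨z, hz⟩ := exists_greedyRem_mul_eq_intCast hn hN j fun i hi => hdvd i (by omega)
    obtain ⟨m, hm⟩ := hdvd j j.lt_succ_self
    rw [greedyRem_succ]
    split_ifs
    · refine ⟨z - m, ?_⟩
      have hnj : (n j : ℚ) ≠ 0 := by exact_mod_cast (hn j).ne'
      rw [sub_mul, hz, hm]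
      push_cast
      field_simp
    · exact ⟨z, hz⟩

theorem exists_sum_eq_of_greedyRem_lt (hn : ∀ i, 0 < n i) (hq : 0 ≤ q) {j : ℕ}
    (hden : q.den ∣ n j) (hdvd : ∀ i ≤ j, n i ∣ n j) (h : greedyRem n q (j + 1) < 1 / n j) :
    ∃ S : Finset ℕ, q = ∑ i ∈ S, 1 / (n i : ℚ) := by
  obtain ⟨z, hz⟩ := exists_greedyRem_mul_eq_intCast hn hden (j + 1) fun i hi => hdvd i (by omega)
  have hnj : (0 : ℚ) < n j := by exact_mod_cast hn j
  have hz0 : (0 : ℚ) ≤ z := hz ▸ mul_nonneg (greedyRem_nonneg hq _) hnj.le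
  have hz1 : (z : ℚ) < 1 := by rwa [← hz, ← lt_div_iff₀ hnj]
  have hzero : greedyRem n q (j + 1) = 0 := by
    have : z = 0 := by
      have h0 : (0 : ℤ) ≤ z := by exact_mod_cast hz0
      have h1 : z < 1 := by exact_mod_cast hz1
      omega
    simpa [this, hnj.ne'] using hz
  refine ⟨greedyChosen n q (j + 1), ?_⟩
  have := greedyRem_add_sum_chosen (n := n) (q := q) (j + 1)
  rwa [hzero, zero_add, eq_comm] at this

end Greedy

section Concat

variable (L : ℕ → ℕ)

def blockStart (k : ℕ) : ℕ := ∑ j ∈ range k, L j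

def blockPos : ℕ → ℕ × ℕ
  | 0 => (0, 0)
  | i + 1 =>
    if (blockPos i).2 + 1 < L (blockPos i).1 then ((blockPos i).1, (blockPos i).2 + 1)
    else ((blockPos i).1 + 1, 0)

def concat {α : Type*} (f : ℕ → ℕ → α) (i : ℕ) : α := f (blockPos L i).1 (blockPos L i).2

variable {L}

theorem blockStart_succ (k : ℕ) : blockStart L (k + 1) = blockStart L k + L k :=
  sum_range_succ _ _

theorem blockStart_mono {k k' : ℕ} (h : k ≤ k') : blockStart L k ≤ blockStart L k' :=
  sum_le_sum_of_subset (range_subset_range.mpr h)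

theorem blockPos_spec (hL : ∀ k, 0 < L k) (i : ℕ) :
    (blockPos L i).2 < L (blockPos L i).1 ∧
      blockStart L (blockPos L i).1 + (blockPos L i).2 = i := by
  induction i with
  | zero => exact ⟨hL 0, rfl⟩
  | succ i ih =>
    rw [blockPos]
    split_ifs with h
    · exact ⟨h, by dsimp only; omega⟩
    · exact ⟨hL _, by dsimp only; rw [blockStart_succ]; omega⟩

theorem exists_eq_blockStart_add (hL : ∀ k, 0 < L k) (i : ℕ) :
    ∃ k s, s < L k ∧ i = blockStart L k + s :=
  ⟨_, _, (blockPos_spec hL i).1, (blockPos_spec hL i).2.symm⟩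

theorem blockStart_add_injective {k k' s s' : ℕ} (hs : s < L k) (hs' : s' < L k')
    (h : blockStart L k + s = blockStart L k' + s') : k = k' ∧ s = s' := by
  suffices k = k' by subst this; omega
  by_contra hne
  rcases Nat.lt_or_gt_of_ne hne with hlt | hlt
  · have := blockStart_mono (L := L) hlt; rw [blockStart_succ] at this; omega
  · have := blockStart_mono (L := L) hlt; rw [blockStart_succ] at this; omega

theorem concat_blockStart_add (hL : ∀ k, 0 < L k) {α : Type*} (f : ℕ → ℕ → α) {k s : ℕ}
    (hs : s < L k) : concat L f (blockStart L k + s) = f k s := by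
  obtain ⟨hlt, heq⟩ := blockPos_spec hL (blockStart L k + s)
  obtain ⟨hk, hs⟩ := blockStart_add_injective hlt hs heq
  rw [concat, hk, hs]

end Concat

structure Blueprint where
  p : ℕ
  a : ℕ
  S : ℕ
  c : ℕ
  w : ℕ → ℕ

namespace Blueprint

variable (B : Blueprint)

def t : ℕ → ℕ
  | 0 => 1
  | k + 1 => B.w k * B.p ^ B.S * t k

def runLength (k : ℕ) : ℕ := k + B.c + B.a * B.S

def stageLength (k : ℕ) : ℕ := B.runLength k + B.S + 1

def stage (k s : ℕ) : ℕ :=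
  if s ≤ B.runLength k then 2 ^ s * B.t k
  else B.w k * B.p ^ (s - B.runLength k - 1) * 2 ^ (B.a * (B.S - (s - B.runLength k - 1))) * B.t k

def n : ℕ → ℕ := concat B.stageLength B.stage

def start (k : ℕ) : ℕ := blockStart B.stageLength k

def jump (k : ℕ) : ℕ := B.start k + B.runLength k

theorem t_succ (k : ℕ) : B.t (k + 1) = B.w k * B.p ^ B.S * B.t k := rfl

theorem t_pos (hp : 0 < B.p) (hw : ∀ k, 0 < B.w k) : ∀ k, 0 < B.t k
  | 0 => Nat.one_pos
  | k + 1 => by rw [t_succ]; have := t_pos hp hw k; have := hw k; positivity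

theorem t_dvd_t {k k' : ℕ} (h : k ≤ k') : B.t k ∣ B.t k' := by
  induction k', h using Nat.le_induction with
  | base => rfl
  | succ k' _ ih => exact ih.trans (Dvd.intro_left _ (B.t_succ k').symm)

theorem factorial_dvd_t (hw : ∀ k, k + 1 ∣ B.w k) : ∀ k, k ! ∣ B.t k
  | 0 => by simp [t]
  | k + 1 => by
    rw [t_succ, Nat.factorial_succ, mul_assoc]
    exact mul_dvd_mul (hw k) (Dvd.dvd.mul_left (factorial_dvd_t hw k) _)

theorem stageLength_pos (k : ℕ) : 0 < B.stageLength k := Nat.succ_pos _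

theorem start_succ (k : ℕ) : B.start (k + 1) = B.jump k + B.S + 1 := by
  rw [start, blockStart_succ, jump, start, stageLength]; ring

theorem n_start_add {k s : ℕ} (hs : s ≤ B.runLength k) : B.n (B.start k + s) = 2 ^ s * B.t k := by
  rw [n, start, concat_blockStart_add B.stageLength_pos _ (by unfold stageLength; omega), stage,
    if_pos hs]

theorem n_jump (k : ℕ) : B.n (B.jump k) = 2 ^ B.runLength k * B.t k :=
  B.n_start_add le_rfl

theorem n_jump_add_succ {k r : ℕ} (hr : r ≤ B.S) :
    B.n (B.jump k + 1 + r) = B.w k * B.p ^ r * 2 ^ (B.a * (B.S - r)) * B.t k := by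
  rcases hr.lt_or_eq with hr | rfl
  · rw [jump, add_assoc, add_assoc,
      n, start, concat_blockStart_add B.stageLength_pos _ (by unfold stageLength; omega), stage,
      if_neg (by omega), show B.runLength k + (1 + r) - B.runLength k - 1 = r by omega]
  · rw [show B.jump k + 1 + B.S = B.start (k + 1) + 0 by rw [start_succ]; ring,
      B.n_start_add (Nat.zero_le _), t_succ]
    simp

theorem exists_index_eq (i : ℕ) :
    (∃ k s, s ≤ B.runLength k ∧ i = B.start k + s) ∨ ∃ k r, r < B.S ∧ i = B.jump k + 1 + r := by
  obtain ⟨k, s, hs, rfl⟩ := exists_eq_blockStart_add B.stageLength_pos i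
  rcases le_or_gt s (B.runLength k) with hle | hgt
  · exact .inl ⟨k, s, hle, rfl⟩
  · refine .inr ⟨k, s - B.runLength k - 1, ?_, ?_⟩
    · unfold stageLength at hs; omega
    · unfold jump start; omega

theorem n_pos (hp : 0 < B.p) (hw : ∀ k, 0 < B.w k) (i : ℕ) : 0 < B.n i := by
  have := B.t_pos hp hw
  rcases B.exists_index_eq i with ⟨k, s, hs, rfl⟩ | ⟨k, r, hr, rfl⟩
  · rw [B.n_start_add hs]; have := this k; positivity
  · rw [B.n_jump_add_succ hr.le]; have := this k; have := hw k; positivity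

theorem n_jump_succ (k : ℕ) : 2 ^ (k + B.c) * B.n (B.jump k + 1) = B.w k * B.n (B.jump k) := by
  rw [← add_zero (B.jump k + 1), B.n_jump_add_succ (Nat.zero_le _), B.n_jump, runLength, pow_add,
    Nat.sub_zero]
  ring

theorem ratio_cases (i : ℕ) :
    B.n (i + 1) = 2 * B.n i ∨ 2 ^ B.a * B.n (i + 1) = B.p * B.n i ∨
      ∃ k, i = B.jump k ∧ 2 ^ (k + B.c) * B.n (i + 1) = B.w k * B.n i := by
  rcases B.exists_index_eq i with ⟨k, s, hs, rfl⟩ | ⟨k, r, hr, rfl⟩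
  · rcases hs.lt_or_eq with hs | rfl
    · left
      rw [add_assoc, B.n_start_add hs, B.n_start_add hs.le, pow_succ]
      ring
    · exact .inr (.inr ⟨k, rfl, B.n_jump_succ k⟩)
  · right; left
    obtain ⟨d, hd⟩ : ∃ d, B.S = r + 1 + d := ⟨B.S - (r + 1), by omega⟩
    rw [add_assoc, B.n_jump_add_succ (r := r + 1) hr, B.n_jump_add_succ hr.le, hd,
      show r + 1 + d - r = d + 1 by omega, show r + 1 + d - (r + 1) = d by omega]
    ring

theorem n_succ_le_two_mul (hp : B.p ≤ 2 ^ (B.a + 1)) {i : ℕ} (hi : ∀ k, i ≠ B.jump k) :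
    B.n (i + 1) ≤ 2 * B.n i := by
  rcases B.ratio_cases i with h | h | ⟨k, hk, -⟩
  · exact h.le
  · refine Nat.le_of_mul_le_mul_left ?_ (Nat.two_pow_pos B.a)
    calc 2 ^ B.a * B.n (i + 1) = B.p * B.n i := h
      _ ≤ 2 ^ (B.a + 1) * B.n i := Nat.mul_le_mul_right _ hp
      _ = 2 ^ B.a * (2 * B.n i) := by ring
  · exact absurd hk (hi k)

theorem jump_strictMono : StrictMono B.jump :=
  strictMono_nat_of_lt_succ fun k => by
    show B.jump k < B.start (k + 1) + B.runLength (k + 1)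
    rw [start_succ]; omega

theorem le_jump (k : ℕ) : k ≤ B.jump k := by
  unfold jump runLength; omega

theorem start_le_jump (k : ℕ) : B.start k ≤ B.jump k := Nat.le_add_right _ _

theorem n_dvd_n_jump {i k : ℕ} (hi : i ≤ B.jump k) : B.n i ∣ B.n (B.jump k) := by
  rw [n_jump]
  rcases B.exists_index_eq i with ⟨k', s, hs, rfl⟩ | ⟨k', r, hr, rfl⟩
  · have hk : k' ≤ k := by
      by_contra! hk
      have := blockStart_mono (L := B.stageLength) hk
      rw [← start, ← start, start_succ] at this
      omega
    rw [B.n_start_add hs]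
    exact mul_dvd_mul (pow_dvd_pow 2 (hs.trans (by unfold runLength; omega))) (B.t_dvd_t hk)
  · have hk : k' < k := by
      by_contra! hk
      have := B.jump_strictMono.monotone hk
      omega
    rw [B.n_jump_add_succ hr.le]
    calc B.w k' * B.p ^ r * 2 ^ (B.a * (B.S - r)) * B.t k'
        ∣ 2 ^ (B.a * B.S) * B.t (k' + 1) := by
          rw [t_succ, show B.a * B.S = B.a * (B.S - r) + B.a * r by
            rw [← mul_add, Nat.sub_add_cancel hr.le]]
          exact ⟨B.p ^ (B.S - r) * 2 ^ (B.a * r), by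
            rw [show B.p ^ B.S = B.p ^ r * B.p ^ (B.S - r) by
              rw [← pow_add, Nat.add_sub_cancel' hr.le], pow_add]
            ring⟩
      _ ∣ 2 ^ B.runLength k * B.t k :=
          mul_dvd_mul (pow_dvd_pow 2 (by unfold runLength; omega)) (B.t_dvd_t hk)

theorem one_div_n_jump_le_sum (hp : 0 < B.p) (hw : ∀ k, 0 < B.w k) {k : ℕ}
    (hwk : (B.w k : ℚ) ≤ 2 ^ (k + B.c) * ∑ r ∈ range (B.S + 1), ((2 : ℚ) ^ B.a / B.p) ^ r) :
    1 / (B.n (B.jump k) : ℚ) ≤ ∑ r ∈ range (B.S + 1), 1 / (B.n (B.jump k + 1 + r) : ℚ) := by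
  have hp' : (0 : ℚ) < B.p := by exact_mod_cast hp
  have hw' : (0 : ℚ) < B.w k := by exact_mod_cast hw k
  have ht : (0 : ℚ) < B.t k := by exact_mod_cast B.t_pos hp hw k
  have hterm : ∀ r ∈ range (B.S + 1), 1 / (B.n (B.jump k + 1 + r) : ℚ) =
      ((2 : ℚ) ^ B.a / B.p) ^ r / (B.w k * 2 ^ (B.a * B.S) * B.t k) := by
    intro r hr
    have hr : r ≤ B.S := Nat.lt_succ_iff.mp (mem_range.mp hr)
    rw [B.n_jump_add_succ hr, show B.a * B.S = B.a * (B.S - r) + B.a * r by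
      rw [← mul_add, Nat.sub_add_cancel hr]]
    push_cast
    rw [div_pow, ← pow_mul, pow_add]
    field_simp
  rw [sum_congr rfl hterm, ← sum_div, n_jump]
  push_cast
  rw [runLength, pow_add, div_le_div_iff₀ (mul_pos (by positivity) ht) (by positivity)]
  nlinarith [mul_le_mul_of_nonneg_right hwk (by positivity : (0 : ℚ) ≤ 2 ^ (B.a * B.S) * B.t k)]

theorem lacunary {lam : ℝ} (hlam : lam ≤ 2) (hp : lam * 2 ^ B.a ≤ B.p)
    (hw : ∀ k, lam * 2 ^ (k + B.c) ≤ B.w k) (i : ℕ) : lam * B.n i ≤ B.n (i + 1) := by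
  have hn : (0 : ℝ) ≤ B.n i := Nat.cast_nonneg _
  rcases B.ratio_cases i with h | h | ⟨k, -, h⟩
  · have h : (B.n (i + 1) : ℝ) = 2 * B.n i := by exact_mod_cast h
    nlinarith
  · have h : (2 : ℝ) ^ B.a * B.n (i + 1) = B.p * B.n i := by exact_mod_cast h
    refine le_of_mul_le_mul_left ?_ (by positivity : (0 : ℝ) < 2 ^ B.a)
    nlinarith
  · have h : (2 : ℝ) ^ (k + B.c) * B.n (i + 1) = B.w k * B.n i := by exact_mod_cast h
    refine le_of_mul_le_mul_left ?_ (by positivity : (0 : ℝ) < 2 ^ (k + B.c))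
    nlinarith [hw k]

theorem lt_n_jump_succ {Lam : ℝ} {k : ℕ} (hn : 0 < B.n (B.jump k))
    (hw : Lam * 2 ^ (k + B.c) < B.w k) : Lam * B.n (B.jump k) < B.n (B.jump k + 1) := by
  have h : (2 : ℝ) ^ (k + B.c) * B.n (B.jump k + 1) = B.w k * B.n (B.jump k) := by
    exact_mod_cast B.n_jump_succ k
  have hn : (0 : ℝ) < B.n (B.jump k) := by exact_mod_cast hn
  refine lt_of_mul_lt_mul_left ?_ (by positivity : (0 : ℝ) ≤ 2 ^ (k + B.c))
  nlinarith

structure Admissible : Prop where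
  p_pos : 0 < B.p
  p_le : B.p ≤ 2 ^ (B.a + 1)
  w_pos : ∀ k, 0 < B.w k
  succ_dvd_w : ∀ k, k + 1 ∣ B.w k
  w_le : ∀ k, (B.w k : ℚ) ≤ 2 ^ (k + B.c) * ∑ r ∈ range (B.S + 1), ((2 : ℚ) ^ B.a / B.p) ^ r

variable {B} {q : ℚ}

theorem Admissible.n_pos (hB : B.Admissible) : ∀ i, 0 < B.n i := B.n_pos hB.p_pos hB.w_pos

theorem Admissible.greedyRem_jump_lt_of_le (hB : B.Admissible) {i k : ℕ} (hik : i ≤ B.jump k)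
    (hprev : ∀ k' < k, B.jump k' < i) (h : greedyRem B.n q (i + 1) < 1 / B.n i) :
    greedyRem B.n q (B.jump k + 1) < 1 / B.n (B.jump k) := by
  refine greedyRem_lt_of_le_two_mul hB.n_pos hik (fun m him hmk => ?_) h
  refine B.n_succ_le_two_mul hB.p_le fun k' hk' => ?_
  rcases lt_or_ge k' k with hlt | hge
  · have := hprev k' hlt; omega
  · have := B.jump_strictMono.monotone hge; omega

theorem Admissible.greedyRem_jump_succ_lt (hB : B.Admissible) (hq : 0 ≤ q) {k : ℕ}
    (h : greedyRem B.n q (B.jump k + 1) < 1 / B.n (B.jump k)) :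
    greedyRem B.n q (B.jump (k + 1) + 1) < 1 / B.n (B.jump (k + 1)) := by
  obtain ⟨r, hr, hskip⟩ := exists_not_le_of_lt_sum hq
    (h.trans_le (B.one_div_n_jump_le_sum hB.p_pos hB.w_pos (hB.w_le k)))
  refine hB.greedyRem_jump_lt_of_le ?_ (fun k' hk' => ?_) (greedyRem_succ_lt_of_not_le hskip)
  · have := B.start_le_jump (k + 1); rw [start_succ] at this; omega
  · have := B.jump_strictMono.monotone (Nat.lt_succ_iff.mp hk'); omega

theorem Admissible.greedyRem_jump_lt (hB : B.Admissible) (hq : 0 ≤ q) {i : ℕ}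
    (h : greedyRem B.n q (i + 1) < 1 / B.n i) :
    ∀ k, i ≤ B.jump k → greedyRem B.n q (B.jump k + 1) < 1 / B.n (B.jump k)
  | 0, hi => hB.greedyRem_jump_lt_of_le hi (fun _ hk => absurd hk (Nat.not_lt_zero _)) h
  | k + 1, hi => by
    rcases le_or_gt i (B.jump k) with hik | hik
    · exact hB.greedyRem_jump_succ_lt hq (hB.greedyRem_jump_lt hq h k hik)
    · exact hB.greedyRem_jump_lt_of_le hi (fun k' hk' =>
        (B.jump_strictMono.monotone (Nat.lt_succ_iff.mp hk')).trans_lt hik) h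

theorem Admissible.exists_sum_eq (hB : B.Admissible) (hq : 0 ≤ q)
    (h : (q : ℝ) < ∑' i, 1 / (B.n i : ℝ)) : ∃ S : Finset ℕ, q = ∑ i ∈ S, 1 / (B.n i : ℚ) := by
  obtain ⟨i, hi⟩ := exists_not_le_of_lt_tsum hq h
  let k := max i q.den
  have hden : q.den ∣ B.n (B.jump k) := by
    rw [n_jump]
    exact ((Nat.dvd_factorial q.den_pos (le_max_right _ _)).trans
      (B.factorial_dvd_t hB.succ_dvd_w k)).trans (dvd_mul_left _ _)
  exact exists_sum_eq_of_greedyRem_lt hB.n_pos hq hden (fun _ => B.n_dvd_n_jump)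
    (hB.greedyRem_jump_lt hq (greedyRem_succ_lt_of_not_le hi) k
      ((le_max_left _ _).trans (B.le_jump k)))

end Blueprint

theorem div_sub_one_le_two {Lam : ℝ} (h : 2 ≤ Lam) : Lam / (Lam - 1) ≤ 2 := by
  rw [div_le_iff₀ (by linarith)]; linarith

theorem exists_nat_div_two_pow_btwn {x y : ℝ} (hx : 0 ≤ x) (hxy : x < y) :
    ∃ p a : ℕ, x < p / 2 ^ a ∧ (p : ℝ) / 2 ^ a < y := by
  obtain ⟨a, ha⟩ := pow_unbounded_of_one_lt (y - x)⁻¹ (one_lt_two : (1 : ℝ) < 2)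
  obtain ⟨z, hxz, hzy⟩ := exists_div_btwn hxy (n := 2 ^ a) (by exact_mod_cast ha)
  push_cast at hxz hzy
  have hz : (0 : ℝ) ≤ z := by
    by_contra! hz
    linarith [hx.trans_lt hxz, div_neg_of_neg_of_pos hz (by positivity : (0 : ℝ) < 2 ^ a)]
  lift z to ℕ using by exact_mod_cast hz
  simp only [Int.cast_natCast] at hxz hzy
  exact ⟨z, a, hxz, hzy⟩

theorem exists_lt_sum_range_pow {x Lam : ℝ} (hx0 : 0 ≤ x) (hx1 : x < 1) (h : Lam < (1 - x)⁻¹) :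
    ∃ S : ℕ, Lam < ∑ r ∈ range (S + 1), x ^ r := by
  obtain ⟨N, hN⟩ := ((hasSum_geometric_of_lt_one hx0 hx1).tendsto_sum_nat.eventually
    (lt_mem_nhds h)).exists_forall_of_atTop
  exact ⟨N, hN _ N.le_succ⟩

theorem exists_add_le_two_pow_mul {Lam G : ℝ} (h : Lam < G) :
    ∃ c : ℕ, ∀ k : ℕ, Lam * 2 ^ (k + c) + (k + 1) ≤ G * 2 ^ (k + c) := by
  obtain ⟨c, hc⟩ := pow_unbounded_of_one_lt (G - Lam)⁻¹ (one_lt_two : (1 : ℝ) < 2)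
  refine ⟨c, fun k => ?_⟩
  have hk : (k : ℝ) + 1 ≤ 2 ^ k := by exact_mod_cast Nat.lt_two_pow_self
  have hc : 1 ≤ 2 ^ c * (G - Lam) := by
    rw [inv_lt_iff_one_lt_mul₀ (by linarith)] at hc; exact hc.le
  have : (k : ℝ) + 1 ≤ 2 ^ k * (2 ^ c * (G - Lam)) :=
    hk.trans (le_mul_of_one_le_right (by positivity) hc)
  rw [pow_add]; nlinarith

theorem exists_nat_dvd_btwn {x : ℝ} (hx : 0 ≤ x) {d : ℕ} (hd : 0 < d) :
    ∃ w : ℕ, d ∣ w ∧ x < w ∧ (w : ℝ) ≤ x + d := by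
  refine ⟨d * (⌊x⌋₊ / d + 1), dvd_mul_right _ _, ?_, ?_⟩
  · calc x < ⌊x⌋₊ + 1 := Nat.lt_floor_add_one x
      _ ≤ (d * (⌊x⌋₊ / d + 1) : ℕ) := by exact_mod_cast Nat.lt_mul_div_succ ⌊x⌋₊ hd
  · have h1 : ((d * (⌊x⌋₊ / d) : ℕ) : ℝ) ≤ ⌊x⌋₊ := by exact_mod_cast Nat.mul_div_le ⌊x⌋₊ d
    have h2 := Nat.floor_le hx
    push_cast at h1 ⊢
    linarith

theorem exists_dyadic_ratio_btwn {Lam lam : ℝ} (hLam : 2 ≤ Lam) (hlam1 : 1 < lam)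
    (hlam2 : lam < Lam / (Lam - 1)) :
    ∃ p a : ℕ, lam * 2 ^ a ≤ p ∧ p ≤ 2 ^ (a + 1) ∧ (2 : ℝ) ^ a / p < 1 ∧
      Lam < (1 - (2 : ℝ) ^ a / p)⁻¹ := by
  obtain ⟨p, a, hlp, hpL⟩ := exists_nat_div_two_pow_btwn (by linarith) hlam2
  have h2a : (0 : ℝ) < 2 ^ a := by positivity
  have h1p : (2 : ℝ) ^ a < p := by rw [lt_div_iff₀ h2a] at hlp; nlinarith
  have hp : (0 : ℝ) < p := h2a.trans h1p
  refine ⟨p, a, by rw [lt_div_iff₀ h2a] at hlp; exact hlp.le, ?_, ?_, ?_⟩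
  · have : (p : ℝ) < 2 ^ (a + 1) := by
      have := hpL.trans_le (div_sub_one_le_two hLam)
      rw [div_lt_iff₀ h2a] at this; rw [pow_succ]; linarith
    exact_mod_cast this.le
  · rwa [div_lt_one hp]
  · rw [one_sub_div hp.ne', inv_div, lt_div_iff₀ (by linarith)]
    rw [div_lt_div_iff₀ h2a (by linarith)] at hpL
    nlinarith

theorem exists_admissible {Lam lam : ℝ} (hLam : 2 ≤ Lam) (hlam1 : 1 < lam)
    (hlam2 : lam < Lam / (Lam - 1)) :
    ∃ B : Blueprint, B.Admissible ∧ lam * 2 ^ B.a ≤ B.p ∧ ∀ k, Lam * 2 ^ (k + B.c) < B.w k := by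
  obtain ⟨p, a, hlp, hp2, hx1, hLx⟩ := exists_dyadic_ratio_btwn hLam hlam1 hlam2
  obtain ⟨S, hS⟩ := exists_lt_sum_range_pow (by positivity) hx1 hLx
  obtain ⟨c, hc⟩ := exists_add_le_two_pow_mul hS
  choose w hdvd hlow hup using fun k : ℕ =>
    exists_nat_dvd_btwn (x := Lam * 2 ^ (k + c)) (by positivity) k.succ_pos
  refine ⟨⟨p, a, S, c, w⟩, ⟨?_, hp2, fun k => ?_, hdvd, fun k => ?_⟩, hlp, hlow⟩
  · have : (0 : ℝ) < p := lt_of_lt_of_le (by positivity) hlp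
    exact_mod_cast this
  · have : (0 : ℝ) < w k := lt_of_le_of_lt (by positivity) (hlow k)
    exact_mod_cast this
  · have h1 := hup k
    have h2 := hc k
    have : ((w k : ℚ) : ℝ) ≤
        ((2 ^ (k + c) * ∑ r ∈ range (S + 1), ((2 : ℚ) ^ a / p) ^ r : ℚ) : ℝ) := by
      push_cast at h1 ⊢; linarith
    exact_mod_cast this

end RationalSubsums

open RationalSubsums in
/-- For every real `Λ ≥ 2` and every real `λ` with
`1 < λ < Λ / (Λ - 1)` there exists a `λ`-lacunary strictly increasing sequence
of positive integers `(n_i)` such that `n (i+1) > Λ * n i` for infinitely many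
indices `i`, and every rational `q` with `0 ≤ q < ∑_i 1 / n_i` is a finite sum
`∑_{i ∈ S} 1 / n i`. -/
theorem stmt7 (Lam lam : ℝ) (hLam : 2 ≤ Lam) (hlam1 : 1 < lam)
    (hlam2 : lam < Lam / (Lam - 1)) :
    ∃ n : ℕ → ℕ, StrictMono n ∧ (∀ i, 0 < n i) ∧
      (∀ i, lam * (n i : ℝ) ≤ (n (i + 1) : ℝ)) ∧
      {i : ℕ | Lam * (n i : ℝ) < (n (i + 1) : ℝ)}.Infinite ∧
      (∀ q : ℚ, 0 ≤ q → (q : ℝ) < ∑' i, (1 : ℝ) / (n i) →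
        ∃ S : Finset ℕ, q = ∑ i ∈ S, (1 : ℚ) / (n i)) := by
  obtain ⟨B, hB, hlp, hw⟩ := exists_admissible hLam hlam1 hlam2
  have hlam_le : lam ≤ 2 := (hlam2.trans_le (div_sub_one_le_two hLam)).le
  have hlac := B.lacunary hlam_le hlp fun k =>
    (mul_le_mul_of_nonneg_right (hlam_le.trans hLam) (by positivity)).trans (hw k).le
  refine ⟨B.n, strictMono_nat_of_lt_succ fun i => ?_, hB.n_pos, hlac,
    Set.infinite_of_injective_forall_mem B.jump_strictMono.injective fun k =>
      B.lt_n_jump_succ (hB.n_pos _) (hw k),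
    fun q hq h => hB.exists_sum_eq hq h⟩
  have : (0 : ℝ) < B.n i := by exact_mod_cast hB.n_pos i
  exact_mod_cast (lt_mul_of_one_lt_left this hlam1).trans_le (hlac i)
end

section
/- Let Λ > 1 and λ ≥ Λ/(Λ−1) be real numbers, and let (n_i)_{i=1}^∞ be a λ-lacunary sequence of positive integers. If there exists an index i with n_{i+1} > Λ·n_i, then ∑_{j>i} 1/n_j < 1/n_i; consequently, the set of finite sums ∑_{j∈S} 1/n_j (S ⊂ ℕ finite) does not contain all rational numbers from the interval [0, ∑_{j=1}^∞ 1/n_j). -/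
/-!
A `λ`-lacunary sequence is dominated by a geometric one, so its reciprocal tail from `a k` on
is at most `λ / (λ - 1) · 1 / a k`. As `t ↦ t / (t - 1)` is a decreasing involution of
`(1, ∞)`, `λ ≥ Λ / (Λ - 1)` gives `λ / (λ - 1) ≤ Λ`, so a jump `a (i + 1) > Λ · a i` pushes
the tail after `i` below `1 / a i`. A rational strictly between that tail and `1 / a i` is
then no finite sum: a sum using an index `≤ i` is at least `1 / a i`, and one avoiding them
is at most the tail.
-/

open Finset

lemma one_lt_of_div_sub_one_le {x y : ℝ} (hx : 1 < x) (h : x / (x - 1) ≤ y) : 1 < y :=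
  ((one_lt_div (by linarith)).2 (by linarith)).trans_le h

lemma div_sub_one_le_of_div_sub_one_le {x y : ℝ} (hx : 1 < x) (h : x / (x - 1) ≤ y) :
    y / (y - 1) ≤ x := by
  have hy := one_lt_of_div_sub_one_le hx h
  rw [div_le_iff₀ (by linarith)]
  nlinarith [(div_le_iff₀ (by linarith : (0 : ℝ) < x - 1)).1 h]

section Lacunary

variable {a : ℕ → ℝ} {lam : ℝ}

lemma pow_mul_le_of_lacunary (hlam : 0 ≤ lam) (hlac : ∀ i, lam * a i ≤ a (i + 1))
    (k j : ℕ) : lam ^ j * a k ≤ a (k + j) := by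
  induction j with
  | zero => simp
  | succ j ih =>
    calc lam ^ (j + 1) * a k = lam * (lam ^ j * a k) := by ring
      _ ≤ lam * a (k + j) := mul_le_mul_of_nonneg_left ih hlam
      _ ≤ a (k + (j + 1)) := hlac (k + j)

lemma one_div_le_of_lacunary (hpos : ∀ i, 0 < a i) (hlam : 0 < lam)
    (hlac : ∀ i, lam * a i ≤ a (i + 1)) (k j : ℕ) :
    1 / a (k + j) ≤ lam⁻¹ ^ j * (1 / a k) := by
  calc 1 / a (k + j) ≤ 1 / (lam ^ j * a k) :=
        one_div_le_one_div_of_le (by have := hpos k; positivity)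
          (pow_mul_le_of_lacunary hlam.le hlac k j)
    _ = lam⁻¹ ^ j * (1 / a k) := by rw [inv_pow]; field_simp

variable (hpos : ∀ i, 0 < a i) (hlam : 1 < lam) (hlac : ∀ i, lam * a i ≤ a (i + 1))
include hpos hlam hlac

lemma antitone_one_div_of_lacunary : Antitone fun i => 1 / a i := by
  have hmono : Monotone a := monotone_nat_of_le_succ fun i => by
    nlinarith [hlac i, hpos i]
  exact fun i j hij => one_div_le_one_div_of_le (hpos i) (hmono hij)

lemma summable_one_div_of_lacunary (k : ℕ) : Summable fun j => 1 / a (k + j) :=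
  Summable.of_nonneg_of_le (fun j => (one_div_pos.2 (hpos _)).le)
    (one_div_le_of_lacunary hpos (by linarith) hlac k)
    ((summable_geometric_of_lt_one (by positivity) (inv_lt_one_of_one_lt₀ hlam)).mul_right _)

lemma tsum_one_div_le_of_lacunary (k : ℕ) :
    ∑' j, 1 / a (k + j) ≤ lam / (lam - 1) * (1 / a k) := by
  have hr0 : 0 ≤ lam⁻¹ := by positivity
  have hr1 : lam⁻¹ < 1 := inv_lt_one_of_one_lt₀ hlam
  calc ∑' j, 1 / a (k + j) ≤ ∑' j, lam⁻¹ ^ j * (1 / a k) :=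
        (summable_one_div_of_lacunary hpos hlam hlac k).tsum_le_tsum
          (one_div_le_of_lacunary hpos (by linarith) hlac k)
          ((summable_geometric_of_lt_one hr0 hr1).mul_right _)
    _ = lam / (lam - 1) * (1 / a k) := by
        rw [tsum_mul_right, tsum_geometric_of_lt_one hr0 hr1]
        congr 1
        field_simp [(by linarith : lam - 1 ≠ 0)]

end Lacunary

lemma tsum_one_div_lt_of_lacunary_of_jump {a : ℕ → ℝ} {Lam lam : ℝ} (hLam : 1 < Lam)
    (hlam : Lam / (Lam - 1) ≤ lam) (hpos : ∀ i, 0 < a i) (hlac : ∀ i, lam * a i ≤ a (i + 1))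
    {i : ℕ} (hjump : Lam * a i < a (i + 1)) :
    ∑' j, 1 / a (i + 1 + j) < 1 / a i := by
  have hpos_i := hpos i
  have hpos_succ := hpos (i + 1)
  calc ∑' j, 1 / a (i + 1 + j) ≤ lam / (lam - 1) * (1 / a (i + 1)) :=
        tsum_one_div_le_of_lacunary hpos (one_lt_of_div_sub_one_le hLam hlam) hlac (i + 1)
    _ ≤ Lam * (1 / a (i + 1)) := by
        gcongr
        exact div_sub_one_le_of_div_sub_one_le hLam hlam
    _ < 1 / a i := by
        rw [mul_one_div, div_lt_div_iff₀ hpos_succ hpos_i]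
        linarith

lemma sum_ne_of_tsum_tail_lt_of_lt {f : ℕ → ℝ} (hf : Antitone f) (hnonneg : ∀ j, 0 ≤ f j)
    (hsum : Summable f) {i : ℕ} {q : ℝ} (htail : ∑' j, f (i + 1 + j) < q) (hq : q < f i)
    (S : Finset ℕ) : ∑ j ∈ S, f j ≠ q := by
  by_cases hsmall : ∃ j ∈ S, j ≤ i
  · obtain ⟨j, hjS, hji⟩ := hsmall
    have : f j ≤ ∑ k ∈ S, f k := single_le_sum (fun k _ => hnonneg k) hjS
    linarith [hf hji]
  · push Not at hsmall
    have hrange : ∀ j ∈ S, j ∉ Set.range (i + 1 + ·) → f j = 0 := fun j hj hnot =>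
      absurd ⟨j - (i + 1), show i + 1 + (j - (i + 1)) = j by have := hsmall j hj; omega⟩ hnot
    have : ∑ j ∈ S, f j ≤ ∑' j, f (i + 1 + j) := by
      rw [← sum_preimage (i + 1 + ·) S (add_right_injective _).injOn f hrange]
      exact (hsum.comp_injective (add_right_injective (i + 1))).sum_le_tsum _
        (fun j _ => hnonneg _)
    linarith

/-- Let `Λ > 1` and `λ ≥ Λ / (Λ - 1)` be reals and let
`(n_i)` be a `λ`-lacunary sequence of positive integers. If `n (i+1) > Λ * n i`
for some index `i`, then `∑_{j > i} 1 / n j < 1 / n i`; consequently the set of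
finite sums `∑_{j ∈ S} 1 / n j` does not contain all rationals from
`[0, ∑_j 1 / n j)`. -/
theorem stmt8 (Lam lam : ℝ) (hLam : 1 < Lam) (hlam : Lam / (Lam - 1) ≤ lam)
    (n : ℕ → ℕ) (hpos : ∀ i, 0 < n i)
    (hlac : ∀ i, lam * (n i : ℝ) ≤ (n (i + 1) : ℝ))
    (i : ℕ) (hjump : Lam * (n i : ℝ) < (n (i + 1) : ℝ)) :
    (∑' j : ℕ, (1 : ℝ) / (n (i + 1 + j))) < 1 / (n i) ∧
      ¬ (∀ q : ℚ, 0 ≤ q → (q : ℝ) < ∑' j, (1 : ℝ) / (n j) →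
          ∃ S : Finset ℕ, q = ∑ j ∈ S, (1 : ℚ) / (n j)) := by
  have hposR : ∀ j, (0 : ℝ) < n j := fun j => by exact_mod_cast hpos j
  have hlam1 := one_lt_of_div_sub_one_le hLam hlam
  have htail := tsum_one_div_lt_of_lacunary_of_jump hLam hlam hposR hlac hjump
  refine ⟨htail, fun hall => ?_⟩
  have hsum : Summable fun j => (1 : ℝ) / n j := by
    simpa using summable_one_div_of_lacunary hposR hlam1 hlac 0
  obtain ⟨q, hq_tail, hq_lt⟩ := exists_rat_btwn htail
  have hq0 : (0 : ℚ) ≤ q := by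
    exact_mod_cast ((tsum_nonneg fun j => (one_div_pos.2 (hposR _)).le).trans hq_tail.le)
  have hq_total : (q : ℝ) < ∑' j, (1 : ℝ) / n j :=
    hq_lt.trans_le (hsum.le_tsum i fun j _ => (one_div_pos.2 (hposR j)).le)
  obtain ⟨S, hS⟩ := hall q hq0 hq_total
  refine sum_ne_of_tsum_tail_lt_of_lt (antitone_one_div_of_lacunary hposR hlam1 hlac)
    (fun j => (one_div_pos.2 (hposR j)).le) hsum hq_tail hq_lt S ?_
  rw [hS]
  push_cast
  rfl
end

section
/- Let T ⊆ ℕ be an infinite set of positive integers such that 2t ∈ T for every t ∈ T, and such that for every odd positive integer l there exists an element of T divisible by l. Let (n_i)_{i=1}^∞ be the strictly increasing enumeration of T. Then a rational number q is a finite sum ∑_{i∈S} 1/n_i over some finite S ⊂ ℕ if and only if 0 ≤ q < ∑_{i=1}^∞ 1/n_i (where the sum is interpreted as +∞ if the series diverges). -/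
open scoped ENNReal

/-!
Within `T`, the elements with a given odd part form chains `g, 2g, 4g, …` (closure under
doubling). By binary expansion, the reciprocals of `g, 2g, …, 2^e g` have as subset sums exactly
the numbers `c / (2^e g)` with `c < 2^(e+1)`, and chains with different odd parts are disjoint.

If `0 ≤ q < ∑_{a ∈ A} 1/a` with `A ⊆ T` finite, take one chain per odd part of `A`, starting at
its least element, and add the chain of an element `t ∈ T` that is divisible by all their heads
and by the denominator of `q`, and whose odd part is new. Measured in units of `1/(2^e t)`, `q`
is a natural number; choosing the coefficients of the chains of `A` greedily leaves a remainder
below `2/t`, which the chain of `t` represents exactly.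
-/

open Finset

theorem Finset.exists_sum_mul_add_eq {ι : Type*} [DecidableEq ι] (s : Finset ι)
    (w : ι → ℕ) {K R : ℕ} (hw : ∀ i ∈ s, w i ≤ R) {m : ℕ} (hm : m < K * ∑ i ∈ s, w i + R) :
    ∃ c : ι → ℕ, (∀ i ∈ s, c i ≤ K) ∧ ∃ r < R, m = ∑ i ∈ s, c i * w i + r := by
  induction s using Finset.induction_on generalizing m with
  | empty => exact ⟨0, by simp, m, by simpa using hm, by simp⟩
  | insert j s hj ih =>
    rw [sum_insert hj] at hm
    set k := min K (m / w j)
    have hkm : k * w j ≤ m :=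
      (Nat.mul_le_mul_right _ (min_le_right _ _)).trans (Nat.div_mul_le_self m (w j))
    -- greedy step: either `k = K`, or what is left is `m % w j < w j ≤ R`
    have hrest : m - k * w j < K * ∑ i ∈ s, w i + R := by
      rcases le_total K (m / w j) with hK | hK
      · rw [show k = K from min_eq_left hK, mul_add] at *
        omega
      · rw [show k = m / w j from min_eq_right hK, ← Nat.mod_eq_sub_div_mul]
        rcases Nat.eq_zero_or_pos (w j) with h0 | hpos
        · simpa only [h0, Nat.mod_zero, zero_add] using hm
        · exact (Nat.mod_lt m hpos).trans_le ((hw j (mem_insert_self j s)).trans (by omega))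
    obtain ⟨c, hcK, r, hr, hmr⟩ := ih (fun i hi => hw i (mem_insert_of_mem hi)) hrest
    have hs : ∑ i ∈ s, Function.update c j k i * w i = ∑ i ∈ s, c i * w i :=
      sum_congr rfl fun i hi => by rw [Function.update_of_ne (ne_of_mem_of_not_mem hi hj)]
    refine ⟨Function.update c j k, fun i hi => ?_, r, hr, ?_⟩
    · rcases mem_insert.mp hi with rfl | hi
      · simp [k]
      · rw [Function.update_of_ne (ne_of_mem_of_not_mem hi hj)]; exact hcK i hi
    · rw [sum_insert hj, hs, Function.update_self]
      omega

theorem Rat.exists_natCast_eq_mul_of_den_dvd {q : ℚ} (hq : 0 ≤ q) {L : ℕ}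
    (hL : q.den ∣ L) : ∃ m : ℕ, (m : ℚ) = q * L := by
  obtain ⟨k, rfl⟩ := hL
  refine ⟨q.num.toNat * k, ?_⟩
  push_cast
  have hnum : ((q.num.toNat : ℕ) : ℚ) = q.num := by
    exact_mod_cast Int.toNat_of_nonneg (Rat.num_nonneg.mpr hq)
  rw [hnum, ← mul_assoc, Rat.mul_den_eq_num]

theorem ENNReal.sum_lt_tsum_of_notMem {α : Type*} {f : α → ℝ≥0∞} {s : Finset α}
    (hs : ∑ i ∈ s, f i ≠ ∞) {j : α} (hj : j ∉ s) (hfj : f j ≠ 0) : ∑ i ∈ s, f i < ∑' i, f i := by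
  classical
  calc ∑ i ∈ s, f i < ∑ i ∈ s, f i + f j := ENNReal.lt_add_right hs hfj
    _ = ∑ i ∈ insert j s, f i := by rw [sum_insert hj, add_comm]
    _ ≤ ∑' i, f i := ENNReal.sum_le_tsum _

theorem ENNReal.ofReal_ratCast_sum_one_div {ι : Type*} {s : Finset ι} {n : ι → ℕ}
    (hn : ∀ i ∈ s, n i ≠ 0) :
    ENNReal.ofReal ((∑ i ∈ s, 1 / (n i : ℚ) : ℚ) : ℝ) = ∑ i ∈ s, ((n i : ℝ≥0∞))⁻¹ := by
  push_cast
  rw [ENNReal.ofReal_sum_of_nonneg fun i _ => by positivity]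
  refine sum_congr rfl fun i hi => ?_
  rw [one_div, ENNReal.ofReal_inv_of_pos (by exact_mod_cast Nat.pos_of_ne_zero (hn i hi)),
    ENNReal.ofReal_natCast]

namespace ReciprocalSums

theorem exists_eq_two_pow_mul_of_ordCompl_eq {a g : ℕ} (hga : g ≤ a)
    (hodd : ordCompl[2] g = ordCompl[2] a) : ∃ i, a = 2 ^ i * g := by
  have ha := Nat.ordProj_mul_ordCompl_eq_self a 2
  have hg := Nat.ordProj_mul_ordCompl_eq_self g 2
  rw [← hodd] at ha
  rcases Nat.eq_zero_or_pos (ordCompl[2] g) with hu | hu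
  · rw [hu, mul_zero] at ha hg
    exact ⟨0, by rw [← ha, ← hg, mul_zero]⟩
  have hle : g.factorization 2 ≤ a.factorization 2 := by
    rw [← Nat.pow_le_pow_iff_right (le_refl 2)]
    exact Nat.le_of_mul_le_mul_right (by omega) hu
  refine ⟨a.factorization 2 - g.factorization 2, ?_⟩
  calc a = 2 ^ (a.factorization 2 - g.factorization 2 + g.factorization 2) * ordCompl[2] g := by
        rw [Nat.sub_add_cancel hle, ha]
    _ = _ := by rw [pow_add, mul_assoc, hg]

theorem injOn_two_pow_mul_sigma {H : Finset ℕ} (hH : 0 ∉ H)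
    (hinj : Set.InjOn (fun h => ordCompl[2] h) H) (I : ℕ → Finset ℕ) :
    Set.InjOn (fun p : (_ : ℕ) × ℕ => 2 ^ p.2 * p.1) ↑(H.sigma I) := by
  rintro ⟨h, i⟩ hp ⟨h', i'⟩ hp' heq
  simp only [coe_sigma, Set.mem_sigma_iff, mem_coe] at hp hp' heq
  have hh : h = h' := hinj hp.1 hp'.1 <| by
    simpa [Nat.ordCompl_self_pow_mul _ _ Nat.prime_two] using congrArg (ordCompl[2] ·) heq
  subst hh
  have hpos : 0 < h := Nat.pos_of_ne_zero fun h0 => hH (h0 ▸ hp.1)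
  rw [Nat.pow_right_injective le_rfl (Nat.eq_of_mul_eq_mul_right hpos heq)]

theorem exists_finset_div_two_pow_eq_sum {c e : ℕ} (hc : c < 2 ^ (e + 1)) :
    ∃ I : Finset ℕ, (c : ℚ) / 2 ^ e = ∑ i ∈ I, 1 / 2 ^ i := by
  set J := c.bitIndices.toFinset
  have hJ : ∀ j ∈ J, j ≤ e := fun j hj => by
    have := (Nat.two_pow_le_of_mem_bitIndices (List.mem_toFinset.mp hj)).trans_lt hc
    exact Nat.lt_succ_iff.mp ((Nat.pow_lt_pow_iff_right (by norm_num)).mp this)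
  refine ⟨J.image (e - ·), ?_⟩
  rw [sum_image fun i hi j hj h => by have := hJ i hi; have := hJ j hj; omega]
  conv_lhs => rw [← Finset.sum_toFinset_bitIndices_two_pow c]
  push_cast
  rw [sum_div]
  refine sum_congr rfl fun j hj => ?_
  rw [← pow_sub_mul_pow (2 : ℚ) (hJ j hj)]
  field_simp

theorem exists_finset_sum_div_eq_sum_one_div {H : Finset ℕ} (hH : 0 ∉ H)
    (hinj : Set.InjOn (fun h => ordCompl[2] h) H) {c : ℕ → ℕ} {e : ℕ}
    (hc : ∀ h ∈ H, c h < 2 ^ (e + 1)) :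
    ∃ D : Finset ℕ, (∀ d ∈ D, ∃ h ∈ H, ∃ i, d = 2 ^ i * h) ∧
      ∑ h ∈ H, (c h : ℚ) / (2 ^ e * h) = ∑ d ∈ D, 1 / (d : ℚ) := by
  choose! I hI using fun h hh => exists_finset_div_two_pow_eq_sum (hc h hh)
  refine ⟨(H.sigma I).image fun p => 2 ^ p.2 * p.1, ?_, ?_⟩
  · simp only [mem_image, mem_sigma]
    rintro d ⟨⟨h, i⟩, ⟨hh, -⟩, rfl⟩
    exact ⟨h, hh, i, rfl⟩
  · rw [sum_image (injOn_two_pow_mul_sigma hH hinj I), sum_sigma]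
    refine sum_congr rfl fun h hh => ?_
    rw [← div_div, hI h hh, sum_div]
    push_cast
    simp only [div_div, mul_comm]

theorem sum_range_one_div_two_pow_mul (e g : ℕ) :
    ∑ i ∈ range (e + 1), (1 : ℚ) / (2 ^ i * g) = (2 ^ (e + 1) - 1) / (2 ^ e * g) := by
  induction e with
  | zero => norm_num
  | succ e ih =>
    rw [sum_range_succ, ih]
    rcases eq_or_ne (g : ℚ) 0 with hg | hg
    · simp [hg]
    · field_simp
      ring

theorem exists_injOn_ordCompl_cover (A : Finset ℕ) :
    ∃ G ⊆ A, Set.InjOn (fun g => ordCompl[2] g) G ∧ ∀ a ∈ A, ∃ g ∈ G, ∃ i, a = 2 ^ i * g := by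
  refine ⟨A.filter fun g => ∀ b ∈ A, ordCompl[2] b = ordCompl[2] g → g ≤ b, filter_subset _ _,
    fun g hg g' hg' hgg' => ?_, fun a ha => ?_⟩
  · simp only [coe_filter] at hg hg'
    exact le_antisymm (hg.2 g' hg'.1 hgg'.symm) (hg'.2 g hg.1 hgg')
  · obtain ⟨g, hg, hmin⟩ := (A.filter fun b => ordCompl[2] b = ordCompl[2] a).exists_min_image id
      ⟨a, mem_filter.mpr ⟨ha, rfl⟩⟩
    rw [mem_filter] at hg
    refine ⟨g, mem_filter.mpr ⟨hg.1, fun b hb hbg => hmin b (mem_filter.mpr ⟨hb, ?_⟩)⟩,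
      exists_eq_two_pow_mul_of_ordCompl_eq (hmin a (mem_filter.mpr ⟨ha, rfl⟩)) hg.2⟩
    rw [hbg, hg.2]

theorem sum_one_div_le_sum_sum_range {A G : Finset ℕ} {e : ℕ}
    (hcover : ∀ a ∈ A, ∃ g ∈ G, ∃ i ≤ e, a = 2 ^ i * g) :
    ∑ a ∈ A, (1 : ℚ) / a ≤ ∑ g ∈ G, ∑ i ∈ range (e + 1), (1 : ℚ) / (2 ^ i * g) := by
  have hsub : A ⊆ (G ×ˢ range (e + 1)).image fun p : ℕ × ℕ => 2 ^ p.2 * p.1 := fun a ha => by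
    obtain ⟨g, hg, i, hi, rfl⟩ := hcover a ha
    exact mem_image.mpr ⟨(g, i), mem_product.mpr ⟨hg, mem_range.mpr (by omega)⟩, rfl⟩
  calc ∑ a ∈ A, (1 : ℚ) / a
      ≤ ∑ a ∈ (G ×ˢ range (e + 1)).image (fun p : ℕ × ℕ => 2 ^ p.2 * p.1), (1 : ℚ) / a :=
        sum_le_sum_of_subset_of_nonneg hsub fun _ _ _ => by positivity
    _ ≤ ∑ p ∈ G ×ˢ range (e + 1), (1 : ℚ) / ((2 ^ p.2 * p.1 : ℕ) : ℚ) :=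
        sum_image_le_of_nonneg fun _ _ => by positivity
    _ = _ := by rw [sum_product]; push_cast; rfl

theorem exists_sum_div_add_div_eq {G : Finset ℕ} (hG0 : 0 ∉ G) {t e : ℕ} (ht0 : t ≠ 0)
    (hGt : ∀ g ∈ G, g ∣ t) (hte : t ≤ 2 ^ e) {q : ℚ} (hq0 : 0 ≤ q) (hqt : q.den ∣ t)
    (hq : q < ∑ g ∈ G, (2 ^ (e + 1) - 1 : ℚ) / (2 ^ e * g)) :
    ∃ c : ℕ → ℕ, (∀ g ∈ G, c g < 2 ^ (e + 1)) ∧ ∃ r : ℕ, r < 2 ^ (e + 1) ∧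
      q = ∑ g ∈ G, (c g : ℚ) / (2 ^ e * g) + r / (2 ^ e * t) := by
  have hG0' : ∀ g ∈ G, (g : ℚ) ≠ 0 := fun g hg => Nat.cast_ne_zero.mpr (ne_of_mem_of_not_mem hg hG0)
  have hw : ∀ g ∈ G, ((t / g : ℕ) : ℚ) = t / g := fun g hg => Nat.cast_div_charZero (hGt g hg)
  have hunit : (0 : ℚ) < 2 ^ e * t := by positivity
  obtain ⟨m, hm⟩ := Rat.exists_natCast_eq_mul_of_den_dvd hq0 (hqt.trans (dvd_mul_left t (2 ^ e)))
  push_cast at hm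
  have hm_lt : m < (2 ^ (e + 1) - 1) * ∑ g ∈ G, t / g + 2 ^ (e + 1) := by
    suffices (m : ℚ) < ((2 ^ (e + 1) - 1 : ℕ) : ℚ) * ∑ g ∈ G, ((t / g : ℕ) : ℚ) by
      have h := this.trans_le (le_add_of_nonneg_right (by positivity : (0 : ℚ) ≤ 2 ^ (e + 1)))
      exact_mod_cast h
    rw [hm, Nat.cast_sub Nat.one_le_two_pow, sum_congr rfl hw, mul_sum]
    calc q * (2 ^ e * t) < (∑ g ∈ G, (2 ^ (e + 1) - 1 : ℚ) / (2 ^ e * g)) * (2 ^ e * t) :=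
          mul_lt_mul_of_pos_right hq hunit
      _ = _ := by
        rw [sum_mul]
        refine sum_congr rfl fun g hg => ?_
        have := hG0' g hg
        push_cast
        field_simp
  have hwR : ∀ g ∈ G, t / g ≤ 2 ^ (e + 1) := fun g _ =>
    (Nat.div_le_self t g).trans (hte.trans (Nat.pow_le_pow_right (by norm_num) (by omega)))
  obtain ⟨c, hcK, r, hr, hmc⟩ := exists_sum_mul_add_eq G (fun g => t / g) hwR hm_lt
  refine ⟨c, fun g hg => (hcK g hg).trans_lt (Nat.sub_lt (by positivity) one_pos), r, hr, ?_⟩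
  rw [eq_div_iff hunit.ne' |>.mpr hm.symm, hmc]
  push_cast
  rw [add_div, sum_div]
  congr 1
  refine sum_congr rfl fun g hg => ?_
  rw [hw g hg]
  have := hG0' g hg
  field_simp

section DoublingClosed

variable {T : Set ℕ}

theorem two_pow_mul_mem (hTdouble : ∀ t ∈ T, 2 * t ∈ T) {t : ℕ} (ht : t ∈ T) (i : ℕ) :
    2 ^ i * t ∈ T := by
  induction i with
  | zero => simpa using ht
  | succ i ih => simpa [pow_succ, mul_comm, mul_left_comm] using hTdouble _ ih

theorem exists_mem_dvd_ordCompl_lt (hT0 : 0 ∉ T) (hTdouble : ∀ t ∈ T, 2 * t ∈ T)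
    (hTodd : ∀ l : ℕ, Odd l → 0 < l → ∃ t ∈ T, l ∣ t) {L : ℕ} (hL : L ≠ 0) :
    ∃ t ∈ T, L ∣ t ∧ ordCompl[2] L < ordCompl[2] t := by
  have hu := Nat.ordCompl_pos 2 hL
  have hodd : Odd (3 * ordCompl[2] L) :=
    Nat.odd_mul.mpr ⟨by decide, Nat.odd_iff.mpr (Nat.two_dvd_ne_zero.mp
      (Nat.not_dvd_ordCompl Nat.prime_two hL))⟩
  obtain ⟨s, hsT, hs⟩ := hTodd _ hodd (by omega)
  have hs0 : s ≠ 0 := fun h => hT0 (h ▸ hsT)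
  refine ⟨2 ^ L.factorization 2 * s, two_pow_mul_mem hTdouble hsT _, ?_, ?_⟩
  · calc L = 2 ^ L.factorization 2 * ordCompl[2] L := (Nat.ordProj_mul_ordCompl_eq_self L 2).symm
      _ ∣ _ := Nat.mul_dvd_mul_left _ ((Dvd.intro_left 3 rfl).trans hs)
  · rw [Nat.ordCompl_self_pow_mul _ _ Nat.prime_two]
    have h3 := Nat.ordCompl_dvd_ordCompl_of_dvd hs 2
    rw [(Nat.ordCompl_eq_self_iff_zero_or_not_dvd _ Nat.prime_two).mpr
      (Or.inr (Nat.two_dvd_ne_zero.mpr (Nat.odd_iff.mp hodd)))] at h3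
    have := Nat.le_of_dvd (Nat.ordCompl_pos 2 hs0) h3
    omega

theorem exists_finset_sum_eq_of_lt_chain_sum (hT0 : 0 ∉ T) (hTdouble : ∀ t ∈ T, 2 * t ∈ T)
    {G : Finset ℕ} (hGT : ↑G ⊆ T) (hGinj : Set.InjOn (fun g => ordCompl[2] g) G)
    {t : ℕ} (ht : t ∈ T) (hGt : ∀ g ∈ G, g ∣ t ∧ ordCompl[2] g ≠ ordCompl[2] t)
    {e : ℕ} (hte : t ≤ 2 ^ e) {q : ℚ} (hq0 : 0 ≤ q) (hqt : q.den ∣ t)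
    (hq : q < ∑ g ∈ G, (2 ^ (e + 1) - 1 : ℚ) / (2 ^ e * g)) :
    ∃ D : Finset ℕ, ↑D ⊆ T ∧ q = ∑ d ∈ D, 1 / (d : ℚ) := by
  have hG0 : 0 ∉ G := fun h => hT0 (hGT h)
  have ht0 : t ≠ 0 := fun h => hT0 (h ▸ ht)
  have htG : t ∉ G := fun h => (hGt t h).2 rfl
  obtain ⟨c, hc, r, hr, hqc⟩ :=
    exists_sum_div_add_div_eq hG0 ht0 (fun g hg => (hGt g hg).1) hte hq0 hqt hq
  have hH0 : 0 ∉ insert t G := by simp [hG0, Ne.symm ht0]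
  have hHinj : Set.InjOn (fun h => ordCompl[2] h) ↑(insert t G) := by
    rw [coe_insert, Set.injOn_insert (mem_coe.not.mpr htG)]
    exact ⟨hGinj, fun ⟨g, hg, hgt⟩ => (hGt g hg).2 hgt⟩
  have hc' : ∀ h ∈ insert t G, Function.update c t r h < 2 ^ (e + 1) := by
    intro h hh
    rcases mem_insert.mp hh with rfl | hh
    · rwa [Function.update_self]
    · rw [Function.update_of_ne (ne_of_mem_of_not_mem hh htG)]; exact hc h hh
  obtain ⟨D, hDH, hD⟩ := exists_finset_sum_div_eq_sum_one_div hH0 hHinj hc'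
  refine ⟨D, fun d hd => ?_, ?_⟩
  · obtain ⟨h, hh, i, rfl⟩ := hDH d hd
    exact two_pow_mul_mem hTdouble (Set.insert_subset ht hGT (by simpa using hh)) i
  · rw [← hD, sum_insert htG, Function.update_self, hqc, add_comm]
    congr 1
    exact sum_congr rfl fun g hg => by rw [Function.update_of_ne (ne_of_mem_of_not_mem hg htG)]

theorem exists_finset_sum_eq_of_lt_sum (hT0 : 0 ∉ T) (hTdouble : ∀ t ∈ T, 2 * t ∈ T)
    (hTodd : ∀ l : ℕ, Odd l → 0 < l → ∃ t ∈ T, l ∣ t) {A : Finset ℕ} (hA : ↑A ⊆ T) {q : ℚ}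
    (hq0 : 0 ≤ q) (hq : q < ∑ a ∈ A, 1 / (a : ℚ)) :
    ∃ D : Finset ℕ, ↑D ⊆ T ∧ q = ∑ d ∈ D, 1 / (d : ℚ) := by
  obtain ⟨G, hGA, hGinj, hcover⟩ := exists_injOn_ordCompl_cover A
  have hG0 : 0 ∉ G := fun h => hT0 (hA (hGA h))
  have hL : (insert q.den G).lcm id ≠ 0 := by simp [Finset.lcm_eq_zero_iff, hG0, q.den_nz]
  obtain ⟨t, ht, hLt, hlt⟩ := exists_mem_dvd_ordCompl_lt hT0 hTdouble hTodd hL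
  have hdvd : ∀ b ∈ insert q.den G, b ∣ t := fun b hb => (dvd_lcm hb).trans hLt
  have hGt : ∀ g ∈ G, g ∣ t ∧ ordCompl[2] g ≠ ordCompl[2] t := fun g hg =>
    ⟨hdvd g (mem_insert_of_mem hg), ((Nat.le_of_dvd (Nat.ordCompl_pos 2 hL)
      (Nat.ordCompl_dvd_ordCompl_of_dvd (dvd_lcm (mem_insert_of_mem hg)) 2)).trans_lt hlt).ne⟩
  obtain ⟨e, he⟩ : ∃ e, e = t + A.sup id := ⟨_, rfl⟩
  have hcover' : ∀ a ∈ A, ∃ g ∈ G, ∃ i ≤ e, a = 2 ^ i * g := by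
    intro a ha
    obtain ⟨g, hg, i, rfl⟩ := hcover a ha
    have : 2 ^ i * g ≤ A.sup id := le_sup (f := id) ha
    have : 1 ≤ g := Nat.one_le_iff_ne_zero.mpr (ne_of_mem_of_not_mem hg hG0)
    exact ⟨g, hg, i, by nlinarith [i.lt_two_pow_self], rfl⟩
  have hte : t ≤ 2 ^ e := t.lt_two_pow_self.le.trans (Nat.pow_le_pow_right (by norm_num) (by omega))
  refine exists_finset_sum_eq_of_lt_chain_sum hT0 hTdouble (fun g hg => hA (hGA hg)) hGinj ht hGt
    hte hq0 (hdvd _ (mem_insert_self _ _)) ?_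
  calc q < _ := hq
    _ ≤ _ := sum_one_div_le_sum_sum_range hcover'
    _ = _ := sum_congr rfl fun g _ => sum_range_one_div_two_pow_mul e g

end DoublingClosed

end ReciprocalSums

open ReciprocalSums

theorem stmt9_general (T : Set ℕ) (hT0 : 0 ∉ T)
    (hTdouble : ∀ t ∈ T, 2 * t ∈ T)
    (hTodd : ∀ l : ℕ, Odd l → 0 < l → ∃ t ∈ T, l ∣ t)
    (n : ℕ → ℕ) (hmono : StrictMono n) (hrange : Set.range n = T) :
    ∀ q : ℚ, (∃ S : Finset ℕ, q = ∑ i ∈ S, (1 : ℚ) / (n i)) ↔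
      (0 ≤ q ∧ ENNReal.ofReal (q : ℝ) < ∑' i, ((n i : ℝ≥0∞))⁻¹) := by
  have hnT : ∀ i, n i ∈ T := fun i => hrange ▸ Set.mem_range_self i
  have hn0 : ∀ i, n i ≠ 0 := fun i h => hT0 (h ▸ hnT i)
  intro q
  constructor
  · rintro ⟨S, rfl⟩
    obtain ⟨j, hj⟩ := Infinite.exists_notMem_finset S
    refine ⟨sum_nonneg fun i _ => by positivity, ?_⟩
    rw [ENNReal.ofReal_ratCast_sum_one_div fun i _ => hn0 i]
    exact ENNReal.sum_lt_tsum_of_notMem (ENNReal.sum_ne_top.mpr fun i _ => by simp [hn0 i]) hj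
      (by simp)
  · rintro ⟨hq0, hq⟩
    obtain ⟨F, hF⟩ := lt_iSup_iff.mp (ENNReal.tsum_eq_iSup_sum ▸ hq)
    rw [← ENNReal.ofReal_ratCast_sum_one_div fun i _ => hn0 i,
      ENNReal.ofReal_lt_ofReal_iff_of_nonneg (by positivity), Rat.cast_lt] at hF
    have hFT : ↑(F.image n) ⊆ T := by
      intro _ h
      obtain ⟨i, -, rfl⟩ := mem_image.mp h
      exact hnT i
    obtain ⟨D, hDT, rfl⟩ := exists_finset_sum_eq_of_lt_sum hT0 hTdouble hTodd hFT hq0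
      (by rwa [sum_image hmono.injective.injOn])
    exact ⟨D.preimage n hmono.injective.injOn,
      (sum_preimage n D _ _ fun d hd hdn => (hdn (hrange ▸ hDT hd)).elim).symm⟩

/-- Let `T ⊆ ℕ` be an infinite set of positive integers with
`2t ∈ T` for every `t ∈ T`, containing a multiple of every odd positive
integer. If `(n_i)` is the strictly increasing enumeration of `T`, then a
rational `q` is a finite sum `∑_{i ∈ S} 1 / n i` if and only if
`0 ≤ q < ∑_i 1 / n_i` (the sum taken in `ℝ≥0∞`, so it may be `+∞`). -/
theorem stmt9 (T : Set ℕ) (hTinf : T.Infinite) (hT0 : 0 ∉ T)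
    (hTdouble : ∀ t ∈ T, 2 * t ∈ T)
    (hTodd : ∀ l : ℕ, Odd l → 0 < l → ∃ t ∈ T, l ∣ t)
    (n : ℕ → ℕ) (hmono : StrictMono n) (hrange : Set.range n = T) :
    ∀ q : ℚ, (∃ S : Finset ℕ, q = ∑ i ∈ S, (1 : ℚ) / (n i)) ↔
      (0 ≤ q ∧ ENNReal.ofReal (q : ℝ) < ∑' i, ((n i : ℝ≥0∞))⁻¹) :=
  stmt9_general T hT0 hTdouble hTodd n hmono hrange
end

section
/- Let x_1 > x_2 > x_3 > ⋯ be a strictly decreasing sequence of positive real numbers such that ∑_{i=1}^∞ x_i converges, such that x_i ≥ ∑_{j>i} x_j for every index i, and such that x_i > ∑_{j>i} x_j for infinitely many indices i. Then the achievement set A((x_i)_{i=1}^∞) := { ∑_{i∈S} x_i : S ⊆ ℕ } (where S ranges over all subsets, finite or infinite) is a compact subset of ℝ with empty interior. -/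
/-!
Identify `S ⊆ ℕ` with its indicator `ε : ℕ → Bool`. The achievement set is then the image of the
Cantor space under the continuous map `ε ↦ ∑ εᵢ xᵢ`, hence compact. The condition
`xᵢ ≥ ∑_{j>i} xⱼ` makes this map monotone for the lexicographic order, so the lexicographic
neighbours `ε|_{<i} 0111…` and `ε|_{<i} 1000…` have sums bounding an open interval of length
`xᵢ - ∑_{j>i} xⱼ` that misses the achievement set and lies within `xᵢ` of `∑ εᵢ xᵢ`. Since this
length is positive for infinitely many `i` and `xᵢ → 0`, these gaps make the complement dense.
-/

open Set Filter

namespace AchievementSet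

noncomputable def subsetSum (x : ℕ → ℝ) (ε : ℕ → Bool) : ℝ :=
  ∑' i, if ε i then x i else 0

open scoped Classical in
theorem setOf_eq_range_subsetSum (x : ℕ → ℝ) :
    {y : ℝ | ∃ S : Set ℕ, y = ∑' i : S, x i} = range (subsetSum x) := by
  ext y
  simp only [mem_ofPred_eq, mem_range, tsum_subtype, subsetSum]
  constructor
  · rintro ⟨S, rfl⟩
    refine ⟨fun i => decide (i ∈ S), tsum_congr fun i => ?_⟩
    by_cases h : i ∈ S <;> simp [h]
  · rintro ⟨ε, rfl⟩
    refine ⟨{i | ε i}, tsum_congr fun i => ?_⟩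
    by_cases h : ε i <;> simp [h]

variable {x : ℕ → ℝ}

theorem summable_ite (hx : ∀ i, 0 ≤ x i) (hsum : Summable x) (ε : ℕ → Bool) :
    Summable fun i => if ε i then x i else 0 :=
  hsum.of_nonneg_of_le (fun i => by split_ifs <;> simp [hx i])
    (fun i => by split_ifs <;> simp [hx i])

theorem continuous_subsetSum (hx : ∀ i, 0 ≤ x i) (hsum : Summable x) :
    Continuous (subsetSum x) :=
  continuous_tsum (fun i => (continuous_of_discreteTopology (f := fun b : Bool =>
      if b then x i else 0)).comp (continuous_apply i)) hsum
    (fun i ε => by split_ifs <;> simp [abs_of_nonneg (hx i), hx i])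

theorem subsetSum_nonneg (hx : ∀ i, 0 ≤ x i) (ε : ℕ → Bool) : 0 ≤ subsetSum x ε :=
  tsum_nonneg fun i => by split_ifs <;> simp [hx i]

theorem subsetSum_le_tsum (hx : ∀ i, 0 ≤ x i) (hsum : Summable x) (ε : ℕ → Bool) :
    subsetSum x ε ≤ ∑' i, x i :=
  (summable_ite hx hsum ε).tsum_le_tsum (fun i => by split_ifs <;> simp [hx i]) hsum

@[simp] theorem subsetSum_true (x : ℕ → ℝ) : subsetSum x (fun _ => true) = ∑' i, x i := by
  simp [subsetSum]

@[simp] theorem subsetSum_false (x : ℕ → ℝ) : subsetSum x (fun _ => false) = 0 := by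
  simp [subsetSum]

theorem subsetSum_eq_sum_range_add (hx : ∀ i, 0 ≤ x i) (hsum : Summable x) (ε : ℕ → Bool)
    (n : ℕ) : subsetSum x ε = ∑ i ∈ Finset.range n, (if ε i then x i else 0) +
      subsetSum (fun i => x (n + i)) (fun i => ε (n + i)) := by
  rw [subsetSum, ← (summable_ite hx hsum ε).sum_add_tsum_nat_add n, subsetSum]
  simp only [add_comm _ n]

theorem subsetSum_le_of_toLex_le (hx : ∀ i, 0 ≤ x i) (hsum : Summable x)
    (hdom : ∀ i, ∑' j, x (i + 1 + j) ≤ x i)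
    {a b : ℕ → Bool} (hab : toLex a ≤ toLex b) : subsetSum x a ≤ subsetSum x b := by
  obtain hlt | heq := hab.lt_or_eq
  swap; · rw [toLex_inj.1 heq]
  obtain ⟨k, hagree, hk⟩ := hlt
  simp only [Pi.toLex_apply, Bool.lt_iff] at hagree hk
  have hprefix : ∑ i ∈ Finset.range k, (if a i then x i else 0) =
      ∑ i ∈ Finset.range k, (if b i then x i else 0) :=
    Finset.sum_congr rfl fun i hi => by rw [hagree i (Finset.mem_range.1 hi)]
  have hx' : ∀ i, 0 ≤ x (k + 1 + i) := fun i => hx _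
  have hsum' : Summable fun i => x (k + 1 + i) := hsum.comp_injective (add_right_injective _)
  rw [subsetSum_eq_sum_range_add hx hsum _ (k + 1), subsetSum_eq_sum_range_add hx hsum _ (k + 1),
    Finset.sum_range_succ, Finset.sum_range_succ, hprefix]
  simp only [hk.1, hk.2, if_true, Bool.false_eq_true, if_false]
  linarith [hdom k, subsetSum_le_tsum hx' hsum' fun i => a (k + 1 + i),
    subsetSum_nonneg hx' fun i => b (k + 1 + i)]

/- `gapLow ε i` and `gapHigh ε i` keep the digits of `ε` below `i` and continue with `0111…`,
resp. `1000…`: neighbours in the lexicographic order whose sums bound a gap of the achievement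
set. -/
def gapLow (ε : ℕ → Bool) (i : ℕ) : ℕ → Bool := fun j => if j < i then ε j else decide (i < j)

def gapHigh (ε : ℕ → Bool) (i : ℕ) : ℕ → Bool := fun j => if j < i then ε j else decide (j = i)

theorem toLex_gapLow_covBy_gapHigh (ε : ℕ → Bool) (i : ℕ) :
    toLex (gapLow ε i) ⋖ toLex (gapHigh ε i) := by
  refine ⟨⟨i, fun j hj => by simp [gapLow, gapHigh, hj], by simp [gapLow, gapHigh]⟩, ?_⟩
  rintro c ⟨k₀, hagree₀, hk₀⟩ ⟨k₁, hagree₁, hk₁⟩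
  simp only [Pi.toLex_apply, Bool.lt_iff] at hagree₀ hagree₁ hk₀ hk₁
  have hk₀i : k₀ ≤ i := by
    by_contra h; simp [gapLow, show ¬ k₀ < i by omega, show i < k₀ by omega] at hk₀
  have hk₁i : k₁ ≤ i := by
    by_contra h; simp [gapHigh, show ¬ k₁ < i by omega, show k₁ ≠ i by omega] at hk₁
  have hsame : ∀ j < i, gapLow ε i j = gapHigh ε i j := fun j hj => by simp [gapLow, gapHigh, hj]
  rcases lt_trichotomy k₀ k₁ with h | rfl | h
  · have := (hagree₁ k₀ h).trans (hsame k₀ (by omega)).symm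
    simp [hk₀.1, hk₀.2] at this
  · simp [hk₀.2] at hk₁
  · have := (hagree₀ k₁ h).symm.trans (hsame k₁ (by omega))
    simp [hk₁.1, hk₁.2] at this

theorem subsetSum_notMem_Ioo (hx : ∀ i, 0 ≤ x i) (hsum : Summable x)
    (hdom : ∀ i, ∑' j, x (i + 1 + j) ≤ x i) (ε δ : ℕ → Bool) (i : ℕ) :
    subsetSum x δ ∉ Ioo (subsetSum x (gapLow ε i)) (subsetSum x (gapHigh ε i)) := by
  rintro ⟨hlow, hhigh⟩
  rcases le_or_gt (toLex δ) (toLex (gapLow ε i)) with h | h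
  · exact (subsetSum_le_of_toLex_le hx hsum hdom h).not_gt hlow
  · exact (subsetSum_le_of_toLex_le hx hsum hdom
      ((toLex_gapLow_covBy_gapHigh ε i).ge_of_gt h)).not_gt hhigh

theorem subsetSum_gapLow (hx : ∀ i, 0 ≤ x i) (hsum : Summable x) (ε : ℕ → Bool) (i : ℕ) :
    subsetSum x (gapLow ε i) =
      ∑ j ∈ Finset.range i, (if ε j then x j else 0) + ∑' j, x (i + 1 + j) := by
  rw [subsetSum_eq_sum_range_add hx hsum _ (i + 1), Finset.sum_range_succ]
  have hprefix :
      ∀ j ∈ Finset.range i, (if gapLow ε i j then x j else 0) = if ε j then x j else 0 :=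
    fun j hj => by simp [gapLow, Finset.mem_range.1 hj]
  have htail : (fun j => gapLow ε i (i + 1 + j)) = fun _ => true := by
    funext j; simp [gapLow, show ¬ i + 1 + j < i by omega, show i < i + 1 + j by omega]
  rw [Finset.sum_congr rfl hprefix, htail]
  simp [gapLow]

theorem subsetSum_gapHigh (hx : ∀ i, 0 ≤ x i) (hsum : Summable x) (ε : ℕ → Bool) (i : ℕ) :
    subsetSum x (gapHigh ε i) = ∑ j ∈ Finset.range i, (if ε j then x j else 0) + x i := by
  rw [subsetSum_eq_sum_range_add hx hsum _ (i + 1), Finset.sum_range_succ]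
  have hprefix :
      ∀ j ∈ Finset.range i, (if gapHigh ε i j then x j else 0) = if ε j then x j else 0 :=
    fun j hj => by simp [gapHigh, Finset.mem_range.1 hj]
  have htail : (fun j => gapHigh ε i (i + 1 + j)) = fun _ => false := by
    funext j; simp [gapHigh, show ¬ i + 1 + j < i by omega, show i + 1 + j ≠ i by omega]
  rw [Finset.sum_congr rfl hprefix, htail]
  simp [gapHigh]

theorem subsetSum_mem_Icc (hx : ∀ i, 0 ≤ x i) (hsum : Summable x) (ε : ℕ → Bool) (i : ℕ) :
    subsetSum x ε ∈ Icc (∑ j ∈ Finset.range i, (if ε j then x j else 0))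
      (∑ j ∈ Finset.range i, (if ε j then x j else 0) + x i + ∑' j, x (i + 1 + j)) := by
  have hx' : ∀ j, 0 ≤ x (i + 1 + j) := fun j => hx _
  have hsum' : Summable fun j => x (i + 1 + j) := hsum.comp_injective (add_right_injective _)
  rw [subsetSum_eq_sum_range_add hx hsum _ (i + 1), Finset.sum_range_succ]
  have := subsetSum_nonneg hx' fun j => ε (i + 1 + j)
  have := subsetSum_le_tsum hx' hsum' fun j => ε (i + 1 + j)
  constructor <;> split_ifs <;> linarith [hx i]

theorem exists_notMem_range_subsetSum_near (hx : ∀ i, 0 ≤ x i) (hsum : Summable x)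
    (hdom : ∀ i, ∑' j, x (i + 1 + j) ≤ x i) {i : ℕ} (hi : ∑' j, x (i + 1 + j) < x i)
    (ε : ℕ → Bool) : ∃ g ∉ range (subsetSum x), |g - subsetSum x ε| < x i := by
  set P := ∑ j ∈ Finset.range i, (if ε j then x j else 0)
  set T := ∑' j, x (i + 1 + j)
  refine ⟨P + (T + x i) / 2, ?_, ?_⟩
  · rintro ⟨δ, hδ⟩
    refine subsetSum_notMem_Ioo hx hsum hdom ε δ i ?_
    rw [hδ, subsetSum_gapLow hx hsum, subsetSum_gapHigh hx hsum]
    constructor <;> linarith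
  · obtain ⟨hlow, hhigh⟩ := subsetSum_mem_Icc hx hsum ε i
    have hT : 0 ≤ T := tsum_nonneg fun j => hx _
    rw [abs_lt]
    constructor <;> linarith

theorem dense_compl_range_subsetSum (hx : ∀ i, 0 ≤ x i) (hsum : Summable x)
    (hdom : ∀ i, ∑' j, x (i + 1 + j) ≤ x i)
    (hstrict : {i | ∑' j, x (i + 1 + j) < x i}.Infinite) : Dense (range (subsetSum x))ᶜ := by
  rw [Metric.dense_iff]
  intro m r hr
  by_cases hm : m ∈ range (subsetSum x)
  swap; · exact ⟨m, Metric.mem_ball_self hr, hm⟩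
  obtain ⟨ε, rfl⟩ := hm
  obtain ⟨N, hN⟩ := eventually_atTop.1 (hsum.tendsto_atTop_zero.eventually (gt_mem_nhds hr))
  obtain ⟨i, hi, hNi⟩ := hstrict.exists_gt N
  obtain ⟨g, hg, hgε⟩ := exists_notMem_range_subsetSum_near hx hsum hdom hi ε
  exact ⟨g, by rw [Metric.mem_ball, Real.dist_eq]; linarith [hN i hNi.le], hg⟩

end AchievementSet

open AchievementSet in
theorem stmt10_general (x : ℕ → ℝ) (hpos : ∀ i, 0 < x i)
    (hsum : Summable x)
    (hge : ∀ i, (∑' j : ℕ, x (i + 1 + j)) ≤ x i)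
    (hgt : {i : ℕ | (∑' j : ℕ, x (i + 1 + j)) < x i}.Infinite) :
    IsCompact {y : ℝ | ∃ S : Set ℕ, y = ∑' i : S, x i} ∧
      interior {y : ℝ | ∃ S : Set ℕ, y = ∑' i : S, x i} = ∅ := by
  have hx : ∀ i, 0 ≤ x i := fun i => (hpos i).le
  rw [setOf_eq_range_subsetSum]
  exact ⟨isCompact_range (continuous_subsetSum hx hsum),
    interior_eq_empty_iff_dense_compl.2 (dense_compl_range_subsetSum hx hsum hge hgt)⟩

/-- Let `x₁ > x₂ > ⋯ > 0` be a strictly decreasing summable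
sequence of positive reals with `x i ≥ ∑_{j > i} x j` for every `i` and
`x i > ∑_{j > i} x j` for infinitely many `i`. Then the achievement set
`A = { ∑_{i ∈ S} x i : S ⊆ ℕ }` (with `S` ranging over all, possibly infinite,
subsets) is compact and has empty interior. -/
theorem stmt10 (x : ℕ → ℝ) (hanti : StrictAnti x) (hpos : ∀ i, 0 < x i)
    (hsum : Summable x)
    (hge : ∀ i, (∑' j : ℕ, x (i + 1 + j)) ≤ x i)
    (hgt : {i : ℕ | (∑' j : ℕ, x (i + 1 + j)) < x i}.Infinite) :
    IsCompact {y : ℝ | ∃ S : Set ℕ, y = ∑' i : S, x i} ∧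
      interior {y : ℝ | ∃ S : Set ℕ, y = ∑' i : S, x i} = ∅ :=
  stmt10_general x hpos hsum hge hgt
end

section
/- Let (n_i)_{i=1}^∞ be a strictly increasing sequence of positive integers such that ∑_{i=1}^∞ 1/n_i converges, and suppose that every rational number q with 0 ≤ q < ∑_{i=1}^∞ 1/n_i can be written as a finite sum ∑_{i∈S} 1/n_i over some finite set S ⊂ ℕ. Then 1/n_i ≤ ∑_{j>i} 1/n_j holds for every index i. -/
/-!
If `1 / n i` exceeded the tail `T = ∑_{j > i} 1 / n j`, then with `A = ∑_{k < i} 1 / n k` the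
interval `(A + T, A + 1 / n i)` would contain a rational `q`, which by hypothesis is a finite
subsum. A finite subsum either contains all of `1 / n 0, …, 1 / n i`, and is then at least
`A + 1 / n i`, or it misses some `1 / n j` with `j ≤ i`; since `1 / n j ≥ 1 / n i`, it is then at
most `A + T`. Either way it cannot equal `q`.
-/

open Finset

section
variable {f : ℕ → ℝ}

theorem sum_le_sum_filter_lt_add_tsum_nat_add (hf : Summable f) (hf0 : 0 ≤ f)
    (S : Finset ℕ) (m : ℕ) :
    ∑ k ∈ S, f k ≤ ∑ k ∈ S with k < m, f k + ∑' j, f (j + m) := by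
  rw [← sum_filter_add_sum_filter_not S (· < m)]
  gcongr
  have hinj : Set.InjOn (· - m) ↑(S.filter (¬ · < m)) := fun a ha b hb hab => by
    simp only [coe_filter, Set.mem_ofPred_eq] at ha hb
    simp only at hab
    omega
  calc ∑ k ∈ S with ¬k < m, f k
      = ∑ j ∈ (S.filter (¬ · < m)).image (· - m), f (j + m) := by
        rw [sum_image hinj]
        refine sum_congr rfl fun k hk => ?_
        rw [Nat.sub_add_cancel (by simp at hk; omega)]
    _ ≤ ∑' j, f (j + m) :=
        (summable_nat_add_iff m).2 hf |>.sum_le_tsum _ fun j _ => hf0 _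

theorem sum_range_succ_le_sum_or_sum_le_sum_range_add_tsum (hf : Summable f) (hf0 : 0 ≤ f)
    {i : ℕ} (hi : ∀ j ≤ i, f i ≤ f j) (S : Finset ℕ) :
    ∑ k ∈ range (i + 1), f k ≤ ∑ k ∈ S, f k ∨
      ∑ k ∈ S, f k ≤ ∑ k ∈ range i, f k + ∑' j, f (j + (i + 1)) := by
  by_cases hsub : range (i + 1) ⊆ S
  · exact .inl (sum_le_sum_of_subset_of_nonneg hsub fun k _ _ => hf0 k)
  right
  obtain ⟨j, hj, hjS⟩ := not_subset.mp hsub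
  have hhead : ∑ k ∈ S with k < i + 1, f k ≤ ∑ k ∈ range i, f k := calc
    _ ≤ ∑ k ∈ (range (i + 1)).erase j, f k := by
        refine sum_le_sum_of_subset_of_nonneg (fun k hk => ?_) fun k _ _ => hf0 k
        simp only [mem_filter] at hk
        exact mem_erase.2 ⟨by rintro rfl; exact hjS hk.1, mem_range.2 hk.2⟩
    _ = ∑ k ∈ range i, f k + f i - f j := by rw [sum_erase_eq_sub hj, sum_range_succ]
    _ ≤ ∑ k ∈ range i, f k := by linarith [hi j (Nat.lt_succ_iff.1 (mem_range.1 hj))]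
  linarith [sum_le_sum_filter_lt_add_tsum_nat_add hf hf0 S (i + 1)]

end

/-- Let `(n_i)` be a strictly increasing sequence of positive
integers with `∑_i 1 / n_i` convergent, such that every rational `q` with
`0 ≤ q < ∑_i 1 / n_i` is a finite sum `∑_{i ∈ S} 1 / n i`. Then
`1 / n i ≤ ∑_{j > i} 1 / n j` for every index `i`. -/
theorem stmt11 (n : ℕ → ℕ) (hmono : StrictMono n) (hpos : ∀ i, 0 < n i)
    (hsum : Summable (fun i => (1 : ℝ) / (n i)))
    (hrep : ∀ q : ℚ, 0 ≤ q → (q : ℝ) < ∑' i, (1 : ℝ) / (n i) →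
      ∃ S : Finset ℕ, q = ∑ i ∈ S, (1 : ℚ) / (n i)) :
    ∀ i, (1 : ℝ) / (n i) ≤ ∑' j : ℕ, (1 : ℝ) / (n (i + 1 + j)) := by
  intro i
  by_contra! hgap
  set f : ℕ → ℝ := fun k => 1 / n k
  have hf0 : 0 ≤ f := fun k => by positivity
  have hanti : ∀ j ≤ i, f i ≤ f j := fun j hj =>
    one_div_le_one_div_of_le (by exact_mod_cast hpos j) (by exact_mod_cast hmono.monotone hj)
  set A := ∑ k ∈ range i, f k
  set T := ∑' j, f (j + (i + 1))
  have hT : ∑' j, f (i + 1 + j) = T := tsum_congr fun j => by rw [add_comm]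
  have htot : ∑' k, f k = A + f i + T := by
    rw [← hsum.sum_add_tsum_nat_add (i + 1), sum_range_succ]
  obtain ⟨q, hAq, hqA⟩ := exists_rat_btwn (show A + T < A + f i by linarith)
  have hT0 : 0 ≤ T := tsum_nonneg fun j => hf0 _
  have hA0 : 0 ≤ A := sum_nonneg fun k _ => hf0 k
  obtain ⟨S, hS⟩ := hrep q (by exact_mod_cast (show (0 : ℝ) ≤ q by linarith)) (by linarith)
  have hqS : (q : ℝ) = ∑ k ∈ S, f k := by rw [hS]; push_cast; rfl
  rcases sum_range_succ_le_sum_or_sum_le_sum_range_add_tsum hsum hf0 hanti S with h | h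
  · rw [sum_range_succ] at h; linarith
  · linarith
end

section
/- Suppose x_1 > x_2 > ⋯ > x_m > 0 are real numbers satisfying x_i ≤ ∑_{j=i+1}^m x_j + x_m for every i = 1, 2, …, m−1. Then for every real number y with 0 ≤ y ≤ ∑_{i=1}^m x_i there exists a subset S ⊆ {1, 2, …, m} such that 0 ≤ y − ∑_{i∈S} x_i ≤ x_m; equivalently, the set of subset sums { ∑_{i∈S} x_i : S ⊆ {1,…,m} } divides the segment [0, ∑_{i=1}^m x_i] into sub-intervals of length at most x_m. -/
/-!
Go through the terms from the largest down, keeping the remaining target in `[0, ∑ later terms]`.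
If the target still fits below the sum of the later terms, skip the current term; if it is at least
the current term, take it. Otherwise the target lies between the sum of the later terms and the
current term, which exceeds that sum by at most `d`, so taking all later terms leaves a gap `≤ d`.
-/

open Finset

theorem Finset.exists_subset_sum_near {ι M : Type*} [LinearOrder ι]
    [AddCommGroup M] [LinearOrder M] [IsOrderedAddMonoid M]
    (s : Finset ι) (x : ι → M) {d : M} (hd : 0 ≤ d)
    (hs : ∀ i ∈ s, x i ≤ ∑ j ∈ s with i < j, x j + d) (y : M) (hy₀ : 0 ≤ y)
    (hy : y ≤ ∑ i ∈ s, x i) :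
    ∃ t ⊆ s, 0 ≤ y - ∑ i ∈ t, x i ∧ y - ∑ i ∈ t, x i ≤ d := by
  induction s using Finset.induction_on_min generalizing y with
  | empty => exact ⟨∅, empty_subset _, by simpa using hy₀, by simpa using hy.trans hd⟩
  | insert a s ha ih =>
    have has : a ∉ s := fun h => lt_irrefl a (ha a h)
    have hfilter : ∀ i ∈ s, {j ∈ insert a s | i < j} = {j ∈ s | i < j} := fun i hi => by
      rw [filter_insert, if_neg (ha i hi).not_gt]
    specialize ih fun i hi => by
      simpa only [hfilter i hi] using hs i (mem_insert_of_mem hi)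
    have hxa : x a ≤ ∑ j ∈ s, x j + d := by
      simpa only [filter_insert, lt_irrefl, if_false, filter_true_of_mem ha]
        using hs a (mem_insert_self a s)
    rw [sum_insert has] at hy
    by_cases hskip : y ≤ ∑ j ∈ s, x j
    · obtain ⟨t, hts, ht⟩ := ih y hy₀ hskip
      exact ⟨t, hts.trans (subset_insert a s), ht⟩
    by_cases htake : x a ≤ y
    · obtain ⟨t, hts, ht₀, ht⟩ := ih (y - x a) (sub_nonneg.mpr htake) (sub_le_iff_le_add'.mpr hy)
      have hat : a ∉ t := fun h => has (hts h)
      refine ⟨insert a t, insert_subset_insert a hts, ?_⟩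
      rw [sum_insert hat, ← sub_sub]
      exact ⟨ht₀, ht⟩
    · refine ⟨s, subset_insert a s, sub_nonneg.mpr (not_le.mp hskip).le, ?_⟩
      rw [sub_le_iff_le_add']
      exact (not_le.mp htake).le.trans hxa

theorem stmt12_general (m : ℕ) (hm : 0 < m) (x : ℕ → ℝ)
    (hpos : ∀ i, i < m → 0 < x i)
    (hineq : ∀ i, i + 1 < m →
      x i ≤ (∑ j ∈ Finset.Ico (i + 1) m, x j) + x (m - 1)) :
    ∀ y : ℝ, 0 ≤ y → y ≤ ∑ i ∈ Finset.range m, x i →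
      ∃ S : Finset ℕ, S ⊆ Finset.range m ∧
        0 ≤ y - ∑ i ∈ S, x i ∧ y - ∑ i ∈ S, x i ≤ x (m - 1) := by
  intro y hy₀ hy
  refine (range m).exists_subset_sum_near x (hpos (m - 1) (by omega)).le
    (fun i hi => ?_) y hy₀ hy
  have hlater : {j ∈ range m | i < j} = Ico (i + 1) m := by
    ext j
    simp only [mem_filter, mem_range, mem_Ico]
    omega
  rw [hlater]
  rcases Nat.lt_or_ge (i + 1) m with hlt | hge
  · exact hineq i hlt
  · rw [Ico_eq_empty_of_le hge, sum_empty, zero_add, show i = m - 1 by simp at hi; omega]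

/-- Suppose `x₁ > x₂ > ⋯ > x_m > 0` (indexed here from `0`,
so the terms are `x 0, …, x (m-1)`) satisfy
`x i ≤ ∑_{j = i+1}^{m} x j + x m` for `i = 1, …, m-1`. Then for every real `y`
with `0 ≤ y ≤ ∑_{i=1}^m x i` there is `S ⊆ {1, …, m}` with
`0 ≤ y - ∑_{i ∈ S} x i ≤ x m`: the subset sums fill the segment
`[0, ∑_{i=1}^m x i]` with gaps of length at most `x m`. -/
theorem stmt12 (m : ℕ) (hm : 0 < m) (x : ℕ → ℝ)
    (hdec : ∀ i j, i < j → j < m → x j < x i)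
    (hpos : ∀ i, i < m → 0 < x i)
    (hineq : ∀ i, i + 1 < m →
      x i ≤ (∑ j ∈ Finset.Ico (i + 1) m, x j) + x (m - 1)) :
    ∀ y : ℝ, 0 ≤ y → y ≤ ∑ i ∈ Finset.range m, x i →
      ∃ S : Finset ℕ, S ⊆ Finset.range m ∧
        0 ≤ y - ∑ i ∈ S, x i ∧ y - ∑ i ∈ S, x i ≤ x (m - 1) :=
  stmt12_general m hm x hpos hineq
end

section
/- Let n_1 < n_2 < n_3 < ⋯ be a strictly increasing sequence of positive integers and m_1 < m_2 < m_3 < ⋯ an infinite sequence of indices such that: (1) every positive integer divides n_i for some index i; (2) for every k, the integer n_{m_k} is divisible by n_j for all 1 ≤ j < m_k; (3) for every k and every index i with m_{k−1} ≤ i < m_k (void condition for k = 1), one has 1/n_i ≤ ∑_{i<j≤m_k} 1/n_j + 1/n_{m_k}; and (4) the strict inequality 1/n_{m_k} < ∑_{j>m_k} 1/n_j holds for infinitely many k (the right-hand side interpreted as +∞ if divergent). Then every rational number q with 0 < q < ∑_{i=1}^∞ 1/n_i is equal to ∑_{i∈S} 1/n_i for infinitely many distinct finite sets S ⊂ ℕ.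 -/
/-!
Call `S` a representation of `q` if `q = ∑_{i ∈ S} 1/n_i`. Conditions (2) and (3) make the greedy
algorithm work on every block `{a, …, m_K}`: after multiplying by `n_{m_K}` the weights
`n_{m_K}/n_i` are integers, each at most one more than the sum of the later ones, so every integer
up to their total is a subset sum. This gives a first representation of `q` (by (1), `n_{m_K} q`
is an integer for large `K`) and, using (4), a representation of `1/n_t` by indices larger than
`t`: for `k` as in (4) with `m_k > t`, (3) gives `1/n_t ≤ ∑_{t<j≤m_k} 1/n_j + 1/n_{m_k}`, and the
last term is beaten by a finite part of the tail after `m_k`. Replacing the largest index of a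
representation by such a representation of its reciprocal yields representations with arbitrarily
large maximum.
-/

open scoped ENNReal

open Finset

theorem exists_subset_sum_eq_of_le_sum_gt_add_one (w : ℕ → ℕ) (s : Finset ℕ)
    (hw : ∀ i ∈ s, w i ≤ ∑ j ∈ s with i < j, w j + 1) {c : ℕ} (hc : c ≤ ∑ j ∈ s, w j) :
    ∃ t ⊆ s, c = ∑ j ∈ t, w j := by
  induction s using Finset.induction_on_min generalizing c with
  | empty => exact ⟨∅, subset_rfl, by simpa using hc⟩
  | insert a s has ih =>
    have ha : a ∉ s := fun h => lt_irrefl a (has a h)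
    have hws : ∀ i ∈ s, w i ≤ ∑ j ∈ s with i < j, w j + 1 := by
      intro i hi
      have := hw i (mem_insert_of_mem hi)
      rwa [filter_insert, if_neg (has i hi).not_gt] at this
    have hwa : w a ≤ ∑ j ∈ s, w j + 1 := by
      have := hw a (mem_insert_self a s)
      rwa [filter_insert, if_neg (lt_irrefl a), filter_true_of_mem has] at this
    rw [sum_insert ha] at hc
    by_cases hac : w a ≤ c
    · obtain ⟨t, hts, ht⟩ := ih hws (c := c - w a) (by omega)
      refine ⟨insert a t, insert_subset_insert a hts, ?_⟩
      rw [sum_insert fun h => ha (hts h)]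
      omega
    · obtain ⟨t, hts, ht⟩ := ih hws (c := c) (by omega)
      exact ⟨t, hts.trans (subset_insert a s), ht⟩

theorem Rat.exists_eq_natCast_div_of_den_dvd {q : ℚ} (hq : 0 ≤ q) {N : ℕ} (hN : 0 < N)
    (h : q.den ∣ N) : ∃ c : ℕ, q = c / N := by
  obtain ⟨d, rfl⟩ := h
  have hd : (d : ℚ) ≠ 0 := by exact_mod_cast (Nat.pos_of_mul_pos_left hN).ne'
  have hnum : ((q.num.toNat : ℕ) : ℚ) = q.num := by
    exact_mod_cast Int.toNat_of_nonneg (Rat.num_nonneg.2 hq)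
  refine ⟨q.num.toNat * d, ?_⟩
  push_cast
  rw [hnum, mul_div_mul_right _ _ hd, Rat.num_div_den]

theorem exists_subset_sum_one_div_eq (n : ℕ → ℕ) (s : Finset ℕ) {N : ℕ} (hN : 0 < N)
    (hdvd : ∀ j ∈ s, n j ∣ N)
    (hs : ∀ i ∈ s, (1 : ℚ) / n i ≤ ∑ j ∈ s with i < j, (1 : ℚ) / n j + 1 / N)
    {q : ℚ} (hq : 0 ≤ q) (hqN : q.den ∣ N) (hqs : q ≤ ∑ j ∈ s, (1 : ℚ) / n j) :
    ∃ t ⊆ s, q = ∑ j ∈ t, (1 : ℚ) / n j := by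
  have hNq : (0 : ℚ) < N := by exact_mod_cast hN
  have hsum : ∀ t ⊆ s, ∑ j ∈ t, (1 : ℚ) / n j = ((∑ j ∈ t, N / n j : ℕ) : ℚ) / N := by
    intro t hts
    push_cast
    rw [sum_div]
    refine sum_congr rfl fun j hj => ?_
    have hnj : (n j : ℚ) ≠ 0 := by
      exact_mod_cast (Nat.pos_of_dvd_of_pos (hdvd j (hts hj)) hN).ne'
    rw [Nat.cast_div (hdvd j (hts hj)) hnj]
    field_simp
  obtain ⟨c, rfl⟩ := Rat.exists_eq_natCast_div_of_den_dvd hq hN hqN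
  have hw : ∀ i ∈ s, N / n i ≤ ∑ j ∈ s with i < j, N / n j + 1 := by
    intro i hi
    have := hs i hi
    rw [← sum_singleton (fun j => (1 : ℚ) / n j) i, hsum _ (singleton_subset_iff.2 hi),
      hsum _ (filter_subset _ s), ← add_div, div_le_div_iff_of_pos_right hNq] at this
    exact_mod_cast this
  rw [hsum s subset_rfl, div_le_div_iff_of_pos_right hNq, Nat.cast_le] at hqs
  obtain ⟨t, hts, rfl⟩ := exists_subset_sum_eq_of_le_sum_gt_add_one _ s hw hqs
  exact ⟨t, hts, (hsum t hts).symm⟩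

theorem exists_subset_Icc_sum_one_div_eq (n : ℕ → ℕ) {a M : ℕ} (hM : 0 < n M)
    (hdvd : ∀ j < M, n j ∣ n M)
    (hcond : ∀ i ∈ Ico a M,
      (1 : ℚ) / n i ≤ ∑ j ∈ Ioc i M, (1 : ℚ) / n j + 1 / n M)
    {q : ℚ} (hq : 0 ≤ q) (hqM : q.den ∣ n M) (hqs : q ≤ ∑ j ∈ Icc a M, (1 : ℚ) / n j) :
    ∃ t ⊆ Icc a M, q = ∑ j ∈ t, (1 : ℚ) / n j := by
  refine exists_subset_sum_one_div_eq n _ hM (fun j hj => ?_) (fun i hi => ?_) hq hqM hqs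
  · rcases (mem_Icc.1 hj).2.lt_or_eq with hjM | rfl
    · exact hdvd j hjM
    · exact dvd_rfl
  · have hfilter : {j ∈ Icc a M | i < j} = Ioc i M := by
      ext j; simp only [mem_filter, mem_Icc, mem_Ioc]; grind
    rw [hfilter]
    rcases (mem_Icc.1 hi).2.lt_or_eq with hiM | rfl
    · exact hcond i (mem_Ico.2 ⟨(mem_Icc.1 hi).1, hiM⟩)
    · simp

theorem ENNReal.inv_natCast_eq_ofReal {k : ℕ} (hk : 0 < k) :
    (k : ℝ≥0∞)⁻¹ = ENNReal.ofReal ((1 / k : ℚ) : ℝ) := by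
  rw [Rat.cast_div, Rat.cast_one, Rat.cast_natCast, one_div,
    ENNReal.ofReal_inv_of_pos (by exact_mod_cast hk), ENNReal.ofReal_natCast]

theorem exists_lt_sum_range_of_ofReal_lt_tsum (n : ℕ → ℕ) (hpos : ∀ i, 0 < n i) {x : ℚ}
    (h : ENNReal.ofReal x < ∑' i, (n i : ℝ≥0∞)⁻¹) :
    ∃ N, x < ∑ i ∈ range N, (1 : ℚ) / n i := by
  simp_rw [ENNReal.inv_natCast_eq_ofReal (hpos _)] at h
  rw [ENNReal.tsum_eq_iSup_nat, lt_iSup_iff] at h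
  obtain ⟨N, hN⟩ := h
  rw [← ENNReal.ofReal_sum_of_nonneg fun i _ => by positivity] at hN
  exact ⟨N, by exact_mod_cast (ENNReal.ofReal_lt_ofReal_iff'.1 hN).1⟩

theorem infinite_setOf_eq_sum_of_forall_eq_sum_gt {M : Type*} [AddCommMonoid M] (f : ℕ → M)
    {q : M} (hq : q ≠ 0) (hrepr : ∃ S : Finset ℕ, q = ∑ i ∈ S, f i)
    (hsplit : ∀ t, ∃ R : Finset ℕ, R.Nonempty ∧ (∀ j ∈ R, t < j) ∧ f t = ∑ j ∈ R, f j) :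
    {S : Finset ℕ | q = ∑ i ∈ S, f i}.Infinite := by
  obtain ⟨S₀, hS₀⟩ := hrepr
  intro hfin
  obtain ⟨S, hSq, hmax⟩ := Set.exists_max_image _ (fun S => S.sup id) hfin ⟨S₀, hS₀⟩
  have hSq : q = ∑ i ∈ S, f i := hSq
  have hS : S.Nonempty := nonempty_of_sum_ne_zero (hSq ▸ hq)
  obtain ⟨R, ⟨x, hxR⟩, hRt, hR⟩ := hsplit (S.max' hS)
  have hdisj : Disjoint (S.erase (S.max' hS)) R := disjoint_left.2 fun y hyS hyR =>
    (hRt y hyR).not_ge (S.le_max' y (mem_of_mem_erase hyS))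
  have hS' : q = ∑ i ∈ S.erase (S.max' hS) ∪ R, f i := by
    rw [sum_union hdisj, ← hR, sum_erase_add _ _ (S.max'_mem hS), hSq]
  have hx : x ≤ (S.erase (S.max' hS) ∪ R).sup id := le_sup (f := id) (mem_union_right _ hxR)
  have hSt : S.sup id ≤ S.max' hS := Finset.sup_le fun y hy => S.le_max' y hy
  exact (hmax _ hS').not_gt ((hSt.trans_lt (hRt x hxR)).trans_le hx)

section

variable {n m : ℕ → ℕ}

theorem one_div_le_sum_Ioc_add_of_lt (hm : StrictMono m)
    (hzero : ∀ i < m 0, (1 : ℚ) / n i ≤ ∑ j ∈ Ioc i (m 0), (1 : ℚ) / n j + 1 / n (m 0))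
    (hsucc : ∀ k i, m k ≤ i → i < m (k + 1) →
      (1 : ℚ) / n i ≤ ∑ j ∈ Ioc i (m (k + 1)), (1 : ℚ) / n j + 1 / n (m (k + 1)))
    (K : ℕ) : ∀ i < m K, (1 : ℚ) / n i ≤ ∑ j ∈ Ioc i (m K), (1 : ℚ) / n j + 1 / n (m K) := by
  induction K with
  | zero => exact hzero
  | succ K ih =>
    intro i hi
    rcases le_or_gt (m K) i with hKi | hiK
    · exact hsucc K i hKi hi
    · have hKK := hm (Nat.lt_succ_self K)
      calc (1 : ℚ) / n i ≤ ∑ j ∈ Ioc i (m K), (1 : ℚ) / n j + 1 / n (m K) := ih i hiK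
        _ ≤ ∑ j ∈ Ioc i (m K), (1 : ℚ) / n j +
            (∑ j ∈ Ioc (m K) (m (K + 1)), (1 : ℚ) / n j + 1 / n (m (K + 1))) := by
          gcongr; exact hsucc K (m K) le_rfl hKK
        _ = ∑ j ∈ Ioc i (m (K + 1)), (1 : ℚ) / n j + 1 / n (m (K + 1)) := by
          rw [← add_assoc, sum_Ioc_consecutive _ hiK.le hKK.le]

theorem exists_eq_sum_one_div (hpos : ∀ i, 0 < n i) (hm : StrictMono m)
    (hcover : ∀ d : ℕ, 0 < d → ∃ i, d ∣ n i) (hdvd : ∀ k, ∀ j < m k, n j ∣ n (m k))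
    (hblock : ∀ K, ∀ i < m K,
      (1 : ℚ) / n i ≤ ∑ j ∈ Ioc i (m K), (1 : ℚ) / n j + 1 / n (m K))
    {q : ℚ} (hq : 0 ≤ q) (hlt : ENNReal.ofReal q < ∑' i, (n i : ℝ≥0∞)⁻¹) :
    ∃ S : Finset ℕ, q = ∑ i ∈ S, (1 : ℚ) / n i := by
  obtain ⟨N, hN⟩ := exists_lt_sum_range_of_ofReal_lt_tsum n hpos hlt
  obtain ⟨i₀, hi₀⟩ := hcover q.den q.den_pos
  set K := N + i₀ + 1
  have hK : K ≤ m K := hm.le_apply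
  have hrange : range N ⊆ Icc 0 (m K) := fun i hi => by
    simp only [mem_range, mem_Icc] at hi ⊢; omega
  obtain ⟨S, -, hS⟩ := exists_subset_Icc_sum_one_div_eq n (a := 0) (hpos _) (hdvd K)
    (fun i hi => hblock K i (mem_Ico.1 hi).2) hq (hi₀.trans (hdvd K i₀ (by omega)))
    (hN.le.trans (sum_le_sum_of_subset_of_nonneg hrange fun i _ _ => by positivity))
  exact ⟨S, hS⟩

theorem exists_gt_sum_one_div_eq_one_div (hpos : ∀ i, 0 < n i) (hm : StrictMono m)
    (hdvd : ∀ k, ∀ j < m k, n j ∣ n (m k))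
    (hblock : ∀ K, ∀ i < m K,
      (1 : ℚ) / n i ≤ ∑ j ∈ Ioc i (m K), (1 : ℚ) / n j + 1 / n (m K))
    (hinf : {k : ℕ | ((n (m k) : ℝ≥0∞))⁻¹ <
        ∑' j : ℕ, ((n (m k + 1 + j) : ℝ≥0∞))⁻¹}.Infinite) (t : ℕ) :
    ∃ R : Finset ℕ, R.Nonempty ∧ (∀ j ∈ R, t < j) ∧ (1 : ℚ) / n t = ∑ j ∈ R, (1 : ℚ) / n j := by
  obtain ⟨k, hk, htk⟩ := hinf.exists_gt t
  replace htk : t < m k := htk.trans_le hm.le_apply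
  rw [Set.mem_ofPred_eq, ENNReal.inv_natCast_eq_ofReal (hpos _)] at hk
  obtain ⟨N, hN⟩ := exists_lt_sum_range_of_ofReal_lt_tsum _ (fun j => hpos _) hk
  set K := m k + N + 1
  have hK : K ≤ m K := hm.le_apply
  have hkK : m k < m K := hm (by have := hm.le_apply (x := k); omega)
  have htail : (1 : ℚ) / n (m k) ≤ ∑ j ∈ Ioc (m k) (m K), (1 : ℚ) / n j := by
    have hIco := sum_Ico_eq_sum_range (fun j => (1 : ℚ) / n j) (m k + 1) (m k + 1 + N)
    rw [Nat.add_sub_cancel_left] at hIco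
    rw [← hIco] at hN
    refine hN.le.trans (sum_le_sum_of_subset_of_nonneg (fun j hj => ?_) fun j _ _ => by positivity)
    simp only [mem_Ico, mem_Ioc] at hj ⊢; omega
  have hchain : (1 : ℚ) / n t ≤ ∑ j ∈ Icc (t + 1) (m K), (1 : ℚ) / n j := by
    rw [Icc_add_one_left_eq_Ioc, ← sum_Ioc_consecutive _ htk.le hkK.le]
    linarith [hblock k t htk]
  have hden : ((1 : ℚ) / n t).den ∣ n (m K) := by
    rw [one_div, Rat.inv_natCast_den_of_pos (hpos t)]
    exact hdvd K t (htk.trans hkK)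
  obtain ⟨R, hRK, hR⟩ := exists_subset_Icc_sum_one_div_eq n (hpos _) (hdvd K)
    (fun i hi => hblock K i (mem_Ico.1 hi).2) (by positivity) hden hchain
  have hR0 : ∑ j ∈ R, (1 : ℚ) / n j ≠ 0 := hR ▸ one_div_ne_zero (by exact_mod_cast (hpos t).ne')
  refine ⟨R, nonempty_of_sum_ne_zero hR0, fun j hj => ?_, hR⟩
  have := (mem_Icc.1 (hRK hj)).1
  omega

end

theorem stmt14_general (n : ℕ → ℕ) (hpos : ∀ i, 0 < n i)
    (m : ℕ → ℕ) (hmmono : StrictMono m)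
    (h1 : ∀ d : ℕ, 0 < d → ∃ i, d ∣ n i)
    (h2 : ∀ k, ∀ j < m k, n j ∣ n (m k))
    (h3a : ∀ i < m 0,
      (1 : ℚ) / (n i) ≤ (∑ j ∈ Finset.Ioc i (m 0), (1 : ℚ) / (n j)) + 1 / (n (m 0)))
    (h3b : ∀ k i, m k ≤ i → i < m (k + 1) →
      (1 : ℚ) / (n i) ≤
        (∑ j ∈ Finset.Ioc i (m (k + 1)), (1 : ℚ) / (n j)) + 1 / (n (m (k + 1))))
    (h4 : {k : ℕ | ((n (m k) : ℝ≥0∞))⁻¹ <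
        ∑' j : ℕ, ((n (m k + 1 + j) : ℝ≥0∞))⁻¹}.Infinite) :
    ∀ q : ℚ, 0 < q → ENNReal.ofReal (q : ℝ) < ∑' i, ((n i : ℝ≥0∞))⁻¹ →
      {S : Finset ℕ | q = ∑ i ∈ S, (1 : ℚ) / (n i)}.Infinite := by
  intro q hq hlt
  have hblock := one_div_le_sum_Ioc_add_of_lt hmmono h3a h3b
  exact infinite_setOf_eq_sum_of_forall_eq_sum_gt _ hq.ne'
    (exists_eq_sum_one_div hpos hmmono h1 h2 hblock hq.le hlt)
    (exists_gt_sum_one_div_eq_one_div hpos hmmono h2 hblock h4)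

/-- Under the hypotheses of Proposition `prop:general`
(conditions (1)–(3) as in Statement 13), if additionally
`1 / n (m k) < ∑_{j > m k} 1 / n j` for infinitely many `k`, then every
rational `q` with `0 < q < ∑_i 1 / n_i` equals `∑_{i ∈ S} 1 / n i` for
infinitely many distinct finite sets `S ⊂ ℕ`. -/
theorem stmt14 (n : ℕ → ℕ) (hmono : StrictMono n) (hpos : ∀ i, 0 < n i)
    (m : ℕ → ℕ) (hmmono : StrictMono m)
    (h1 : ∀ d : ℕ, 0 < d → ∃ i, d ∣ n i)
    (h2 : ∀ k, ∀ j < m k, n j ∣ n (m k))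
    (h3a : ∀ i < m 0,
      (1 : ℚ) / (n i) ≤ (∑ j ∈ Finset.Ioc i (m 0), (1 : ℚ) / (n j)) + 1 / (n (m 0)))
    (h3b : ∀ k i, m k ≤ i → i < m (k + 1) →
      (1 : ℚ) / (n i) ≤
        (∑ j ∈ Finset.Ioc i (m (k + 1)), (1 : ℚ) / (n j)) + 1 / (n (m (k + 1))))
    (h4 : {k : ℕ | ((n (m k) : ℝ≥0∞))⁻¹ <
        ∑' j : ℕ, ((n (m k + 1 + j) : ℝ≥0∞))⁻¹}.Infinite) :
    ∀ q : ℚ, 0 < q → ENNReal.ofReal (q : ℝ) < ∑' i, ((n i : ℝ≥0∞))⁻¹ →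
      {S : Finset ℕ | q = ∑ i ∈ S, (1 : ℚ) / (n i)}.Infinite :=
  stmt14_general n hpos m hmmono h1 h2 h3a h3b h4
end

section
/- Let n_1 < n_2 < n_3 < ⋯ be a strictly increasing sequence of positive integers satisfying n_{i+1} ≤ 2·n_i for every index i. Then: (a) for every pair of indices i < m one has 1/n_i ≤ ∑_{i<j≤m} 1/n_j + 1/n_m; and (b) if moreover the strict inequality n_{i+1} < 2·n_i holds for infinitely many indices i, then 1/n_m < ∑_{j>m} 1/n_j holds for every index m. -/
/-!
The hypothesis `n (i + 1) ≤ 2 * n i` says `1 / n i ≤ 2 / n (i + 1)`: each term is dominated by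
twice the next one, and telescoping this gives (a). Letting `m → ∞` in (a), where `1 / n m → 0`,
bounds each term by its tail. A single strict step `1 / n k < 2 / n (k + 1)` makes this bound strict
at `k`, and the strictness propagates back to every `m ≤ k` because the terms are finite.
-/

open scoped ENNReal

open Finset Filter Topology

section OrderedMonoid

variable {M : Type*} [AddCommMonoid M] [PartialOrder M] [IsOrderedAddMonoid M]

theorem le_sum_Ioc_add_of_le_add_self {a : ℕ → M} (h : ∀ i, a i ≤ a (i + 1) + a (i + 1))
    {i m : ℕ} (him : i ≤ m) : a i ≤ ∑ j ∈ Ioc i m, a j + a m := by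
  induction m, him using Nat.le_induction with
  | base => simp
  | succ m him ih =>
    calc a i ≤ ∑ j ∈ Ioc i m, a j + a m := ih
      _ ≤ ∑ j ∈ Ioc i m, a j + (a (m + 1) + a (m + 1)) := by gcongr; exact h m
      _ = ∑ j ∈ Ioc i (m + 1), a j + a (m + 1) := by
        rw [sum_Ioc_succ_top him, add_assoc]

end OrderedMonoid

theorem one_div_le_one_div_add_one_div {K : Type*} [Field K] [LinearOrder K]
    [IsStrictOrderedRing K] {x y : K} (hy : 0 < y) (h : y ≤ 2 * x) :
    1 / x ≤ 1 / y + 1 / y := by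
  have hx : 0 < x := by linarith
  rw [← add_div, div_le_div_iff₀ hx hy]
  linarith

namespace ENNReal

theorem inv_eq_inv_two_mul_add_inv_two_mul (x : ℝ≥0∞) : x⁻¹ = (2 * x)⁻¹ + (2 * x)⁻¹ := by
  rw [← two_mul, ENNReal.mul_inv (by simp) (by simp), ← mul_assoc,
    ENNReal.mul_inv_cancel (by simp) (by simp), one_mul]

theorem inv_le_inv_add_inv {x y : ℝ≥0∞} (h : y ≤ 2 * x) : x⁻¹ ≤ y⁻¹ + y⁻¹ := by
  rw [inv_eq_inv_two_mul_add_inv_two_mul x]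
  gcongr

theorem inv_lt_inv_add_inv {x y : ℝ≥0∞} (h : y < 2 * x) : x⁻¹ < y⁻¹ + y⁻¹ := by
  rw [inv_eq_inv_two_mul_add_inv_two_mul x, ← two_mul, ← two_mul]
  gcongr
  exact ENNReal.ofNat_ne_top

theorem tsum_tail_eq_add (a : ℕ → ℝ≥0∞) (i : ℕ) :
    ∑' j, a (i + 1 + j) = a (i + 1) + ∑' j, a (i + 1 + 1 + j) := by
  rw [tsum_eq_zero_add' ENNReal.summable]
  simp only [add_zero, add_assoc, add_comm 1]

theorem sum_Ioc_le_tsum_tail (a : ℕ → ℝ≥0∞) (i m : ℕ) :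
    ∑ j ∈ Ioc i m, a j ≤ ∑' j, a (i + 1 + j) := by
  rw [← Finset.Ico_add_one_add_one_eq_Ioc, sum_Ico_eq_sum_range]
  exact ENNReal.sum_le_tsum _

variable {a : ℕ → ℝ≥0∞} (h : ∀ i, a i ≤ a (i + 1) + a (i + 1))
include h

theorem le_tsum_tail (h₀ : Tendsto a atTop (𝓝 0)) (i : ℕ) : a i ≤ ∑' j, a (i + 1 + j) := by
  refine ge_of_tendsto (by simpa using h₀.const_add (∑' j, a (i + 1 + j))) ?_
  filter_upwards [eventually_ge_atTop i] with m him
  calc a i ≤ ∑ j ∈ Ioc i m, a j + a m := le_sum_Ioc_add_of_le_add_self h him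
    _ ≤ ∑' j, a (i + 1 + j) + a m := by gcongr; exact sum_Ioc_le_tsum_tail a i m

theorem lt_tsum_tail (h₀ : Tendsto a atTop (𝓝 0)) (hfin : ∀ i, a i ≠ ∞) {i k : ℕ}
    (hik : i ≤ k) (hk : a k < a (k + 1) + a (k + 1)) : a i < ∑' j, a (i + 1 + j) := by
  induction hik using Nat.decreasingInduction with
  | self =>
    calc a k < a (k + 1) + a (k + 1) := hk
      _ ≤ a (k + 1) + ∑' j, a (k + 1 + 1 + j) := by gcongr; exact le_tsum_tail h h₀ _
      _ = ∑' j, a (k + 1 + j) := (tsum_tail_eq_add a k).symm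
  | of_succ i _ ih =>
    calc a i ≤ a (i + 1) + a (i + 1) := h i
      _ < a (i + 1) + ∑' j, a (i + 1 + 1 + j) := ENNReal.add_lt_add_left (hfin _) ih
      _ = ∑' j, a (i + 1 + j) := (tsum_tail_eq_add a i).symm

end ENNReal

/-- Let `n₁ < n₂ < ⋯` be positive integers with
`n (i+1) ≤ 2 * n i` for every `i`. Then (a) for all indices `i < m` one has
`1 / n i ≤ ∑_{i < j ≤ m} 1 / n j + 1 / n m`; and (b) if moreover
`n (i+1) < 2 * n i` for infinitely many `i`, then
`1 / n m < ∑_{j > m} 1 / n j` for every `m` (sum in `ℝ≥0∞`, possibly `+∞`). -/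
theorem stmt15 (n : ℕ → ℕ) (hmono : StrictMono n) (hpos : ∀ i, 0 < n i)
    (hub : ∀ i, n (i + 1) ≤ 2 * n i) :
    (∀ i m : ℕ, i < m →
      (1 : ℚ) / (n i) ≤ (∑ j ∈ Finset.Ioc i m, (1 : ℚ) / (n j)) + 1 / (n m)) ∧
    ({i : ℕ | n (i + 1) < 2 * n i}.Infinite →
      ∀ m : ℕ, ((n m : ℝ≥0∞))⁻¹ < ∑' j : ℕ, ((n (m + 1 + j) : ℝ≥0∞))⁻¹) := by
  constructor
  · intro i m him
    refine le_sum_Ioc_add_of_le_add_self (a := fun j => (1 : ℚ) / n j) (fun j => ?_) him.le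
    exact one_div_le_one_div_add_one_div (by exact_mod_cast hpos _) (by exact_mod_cast hub j)
  · intro hinf m
    obtain ⟨k, hk, hmk⟩ := hinf.exists_gt m
    have hstep (i : ℕ) : ((n i : ℝ≥0∞))⁻¹ ≤ ((n (i + 1) : ℝ≥0∞))⁻¹ + ((n (i + 1) : ℝ≥0∞))⁻¹ :=
      ENNReal.inv_le_inv_add_inv (by exact_mod_cast hub i)
    have hlim : Tendsto (fun i => ((n i : ℝ≥0∞))⁻¹) atTop (𝓝 0) :=
      ENNReal.tendsto_inv_nat_nhds_zero.comp hmono.tendsto_atTop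
    have hfin (i : ℕ) : ((n i : ℝ≥0∞))⁻¹ ≠ ∞ := by simpa using (hpos i).ne'
    exact ENNReal.lt_tsum_tail hstep hlim hfin hmk.le
      (ENNReal.inv_lt_inv_add_inv (by exact_mod_cast hk))
end

section
/- For every real λ with 1 < λ < 2 and every positive integer Q, there exists a positive integer N divisible by Q together with a chain of divisors 1 = d_0 < d_1 < d_2 < ⋯ < d_{M−1} < d_M = N of N (each d_j divides N) such that λ ≤ d_{j+1}/d_j ≤ 2 for every j with 0 ≤ j ≤ M−1. -/
lemma key_density (α β : ℝ) (hα : 1 < α) (hβ0 : 0 < β) (hβ1 : β < 1)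
    (hirr : ∀ m : ℕ, 1 ≤ m → ∀ v : ℤ, (m : ℝ) * α ≠ (v : ℝ)) :
    ∃ (s v : ℕ), 1 ≤ s ∧ β ≤ (s : ℝ) * α - v ∧ (s : ℝ) * α - v ≤ 1 := by
  obtain ⟨n, hn⟩ := exists_nat_one_div_lt (show (0:ℝ) < 1 - β by linarith)
  have hmaps : ∀ t ∈ Finset.range (n+2),
      (⌊((n+1 : ℕ) : ℝ) * Int.fract ((t : ℝ) * α)⌋).toNat ∈ Finset.range (n+1) := by
    intro t _
    have h1 : ((n+1 : ℕ) : ℝ) * Int.fract ((t : ℝ) * α) < ((n+1 : ℕ) : ℝ) := by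
      have := Int.fract_lt_one ((t : ℝ) * α)
      have hp : (0:ℝ) < ((n+1 : ℕ) : ℝ) := by positivity
      nlinarith
    have : ⌊((n+1 : ℕ) : ℝ) * Int.fract ((t : ℝ) * α)⌋ < (n+1 : ℕ) :=
      Int.floor_lt.mpr (by exact_mod_cast h1)
    simp only [Finset.mem_range]
    omega
  obtain ⟨t1, ht1, t2, ht2, hne, heq⟩ :=
    Finset.exists_ne_map_eq_of_card_lt_of_maps_to (by simp) hmaps
  wlog hlt : t2 < t1 generalizing t1 t2
  · exact this t2 ht2 t1 ht1 hne.symm heq.symm (by omega)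
  have hfloor : ⌊((n+1 : ℕ) : ℝ) * Int.fract ((t1 : ℝ) * α)⌋
      = ⌊((n+1 : ℕ) : ℝ) * Int.fract ((t2 : ℝ) * α)⌋ := by
    have h01 : (0:ℤ) ≤ ⌊((n+1 : ℕ) : ℝ) * Int.fract ((t1 : ℝ) * α)⌋ :=
      Int.floor_nonneg.mpr (mul_nonneg (by positivity) (Int.fract_nonneg _))
    have h02 : (0:ℤ) ≤ ⌊((n+1 : ℕ) : ℝ) * Int.fract ((t2 : ℝ) * α)⌋ :=
      Int.floor_nonneg.mpr (mul_nonneg (by positivity) (Int.fract_nonneg _))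
    omega
  have habs := Int.abs_sub_lt_one_of_floor_eq_floor hfloor
  set δ : ℝ := Int.fract ((t1 : ℝ) * α) - Int.fract ((t2 : ℝ) * α) with hδ
  have hdist : |δ| < 1 - β := by
    have hp : (0:ℝ) < ((n+1 : ℕ) : ℝ) := by positivity
    have habs' : ((n+1 : ℕ) : ℝ) * |δ| < 1 := by
      rw [hδ, ← abs_of_pos hp, ← abs_mul, mul_sub]; exact habs
    have h2 : |δ| < 1 / ((n+1 : ℕ) : ℝ) := by
      rw [lt_div_iff₀ hp, mul_comm]; exact habs'
    calc |δ| < 1 / ((n+1:ℕ) : ℝ) := h2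
      _ < 1 - β := by push_cast; exact hn
  set m : ℕ := t1 - t2 with hm
  have hm1 : 1 ≤ m := by omega
  set w : ℤ := ⌊(t1 : ℝ) * α⌋ - ⌊(t2 : ℝ) * α⌋ with hw
  have hδeq : (m : ℝ) * α - (w : ℝ) = δ := by
    simp only [hδ, Int.fract, hw, hm]
    push_cast [Nat.cast_sub hlt.le]
    ring
  have hδne : δ ≠ 0 := fun h =>
    hirr m hm1 w (by rw [h] at hδeq; linarith)
  have hmα : (1:ℝ) < (m : ℝ) * α := by
    have h1 : (1:ℝ) ≤ (m:ℝ) := by exact_mod_cast hm1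
    nlinarith
  have hdistl := (abs_lt.mp hdist).1
  have hdistr := (abs_lt.mp hdist).2
  rcases lt_or_gt_of_ne hδne with hneg | hpos
  · -- δ < 0 : use s = m, v = w - 1
    have hw2 : (1:ℝ) < (w:ℝ) := by linarith
    have hw2' : (1:ℤ) < w := by exact_mod_cast hw2
    have hcast : (((w - 1).toNat : ℕ) : ℝ) = (w:ℝ) - 1 := by
      exact_mod_cast congrArg (Int.cast : ℤ → ℝ) (Int.toNat_of_nonneg (show (0:ℤ) ≤ w - 1 by omega))
    refine ⟨m, (w - 1).toNat, hm1, ?_, ?_⟩ <;> rw [hcast] <;> linarith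
  · -- δ > 0 : use s = K * m, v = K * w
    have hw1 : (0:ℝ) < (w:ℝ) := by linarith
    have hw1' : (0:ℤ) < w := by exact_mod_cast hw1
    have hex : ∃ k : ℕ, β ≤ (k:ℝ) * δ := by
      obtain ⟨k, hk⟩ := exists_nat_ge (β / δ)
      exact ⟨k, by rw [div_le_iff₀ hpos] at hk; linarith⟩
    set K := Nat.find hex with hK
    have hKspec : β ≤ (K:ℝ) * δ := Nat.find_spec hex
    have hK1 : 1 ≤ K := by
      rcases Nat.eq_zero_or_pos K with h | h
      · exfalso; rw [h] at hKspec; push_cast at hKspec; linarith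
      · exact h
    have hKmin : ¬ β ≤ ((K - 1 : ℕ):ℝ) * δ := Nat.find_min hex (by omega)
    push_neg at hKmin
    have hKup : (K:ℝ) * δ < 1 := by
      have : ((K - 1 : ℕ):ℝ) = (K:ℝ) - 1 := by
        push_cast [Nat.cast_sub hK1]; ring
      rw [this] at hKmin
      nlinarith
    have hcast : ((((K : ℤ) * w).toNat : ℕ) : ℝ) = (K:ℝ) * (w:ℝ) := by
      have h := Int.toNat_of_nonneg (show (0:ℤ) ≤ (K:ℤ) * w by positivity)
      exact_mod_cast congrArg (Int.cast : ℤ → ℝ) h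
    refine ⟨K * m, ((K : ℤ) * w).toNat, Nat.mul_pos hK1 hm1, ?_, ?_⟩ <;>
      · push_cast
        rw [hcast]
        nlinarith


lemma build_chain (lam : ℝ) (hlam1 : 1 < lam) (hlam2 : lam < 2)
    (Q s v : ℕ) (hQ : 0 < Q) (hs : 1 ≤ s)
    (h1 : lam * (2:ℝ)^v ≤ (Q:ℝ)^s)
    (h2 : (Q:ℝ)^s ≤ 2 * (2:ℝ)^v) :
    ∃ (N M : ℕ) (d : ℕ → ℕ), 0 < N ∧ Q ∣ N ∧ d 0 = 1 ∧ d M = N ∧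
      (∀ j ≤ M, d j ∣ N) ∧
      (∀ j < M, d j < d (j + 1)) ∧
      (∀ j < M, lam * (d j : ℝ) ≤ (d (j + 1) : ℝ) ∧
        (d (j + 1) : ℝ) ≤ 2 * (d j : ℝ)) := by
  have hQs : 0 < Q ^ s := pow_pos hQ s
  have h2v : (0:ℝ) < (2:ℝ)^v := by positivity
  have hlt : (2:ℕ)^v < Q^s := by
    have : ((2:ℕ)^v : ℝ) < ((Q^s : ℕ) : ℝ) := by push_cast; nlinarith
    exact_mod_cast this
  set d : ℕ → ℕ := fun j => if j ≤ v then 2^j else Q^s * 2^(j-(v+1)) with hd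
  have hd1 : ∀ j, j ≤ v → d j = 2^j := fun j hj => if_pos hj
  have hd2 : ∀ j, v < j → d j = Q^s * 2^(j-(v+1)) := fun j hj => if_neg (by omega)
  refine ⟨Q^s * 2^v, 2*v+1, d, by positivity,
    dvd_mul_of_dvd_left (dvd_pow_self Q (by omega)) _,
    by rw [hd1 0 (by omega), pow_zero],
    by rw [hd2 (2*v+1) (by omega), show 2*v+1-(v+1) = v by omega],
    ?_, ?_, ?_⟩
  · intro j hj
    by_cases hjv : j ≤ v
    · rw [hd1 j hjv]
      exact dvd_mul_of_dvd_right (pow_dvd_pow 2 hjv) _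
    · rw [hd2 j (by omega)]
      exact mul_dvd_mul_left _ (pow_dvd_pow 2 (by omega))
  · intro j hj
    rcases lt_trichotomy j v with h | h | h
    · rw [hd1 j (by omega), hd1 (j+1) (by omega)]
      exact Nat.pow_lt_pow_right (by norm_num) (by omega)
    · subst h
      rw [hd1 j le_rfl, hd2 (j+1) (by omega), show j+1-(j+1) = 0 by omega, pow_zero, mul_one]
      exact hlt
    · rw [hd2 j h, hd2 (j+1) (by omega)]
      exact (Nat.mul_lt_mul_left hQs).mpr (Nat.pow_lt_pow_right (by norm_num) (by omega))
  · intro j hj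
    rcases lt_trichotomy j v with h | h | h
    · rw [hd1 j (by omega), hd1 (j+1) (by omega)]
      have hp : (0:ℝ) < (2:ℝ)^j := by positivity
      push_cast [pow_succ]
      constructor <;> nlinarith
    · subst h
      rw [hd1 j le_rfl, hd2 (j+1) (by omega), show j+1-(j+1) = 0 by omega, pow_zero, mul_one]
      push_cast
      exact ⟨h1, h2⟩
    · rw [hd2 j h, hd2 (j+1) (by omega), show j+1-(v+1) = (j-(v+1))+1 by omega]
      have hp : (0:ℝ) < (Q:ℝ)^s * (2:ℝ)^(j-(v+1)) := by positivity
      push_cast [pow_succ]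
      constructor <;> nlinarith

/-- For every real `λ` with `1 < λ < 2` and every positive
integer `Q` there exist a positive integer `N` divisible by `Q` and a chain of
divisors `1 = d 0 < d 1 < ⋯ < d M = N` of `N` with
`λ ≤ d (j+1) / d j ≤ 2` for every `j < M`. -/
theorem stmt16 (lam : ℝ) (hlam1 : 1 < lam) (hlam2 : lam < 2)
    (Q : ℕ) (hQ : 0 < Q) :
    ∃ (N M : ℕ) (d : ℕ → ℕ), 0 < N ∧ Q ∣ N ∧ d 0 = 1 ∧ d M = N ∧
      (∀ j ≤ M, d j ∣ N) ∧
      (∀ j < M, d j < d (j + 1)) ∧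
      (∀ j < M, lam * (d j : ℝ) ≤ (d (j + 1) : ℝ) ∧
        (d (j + 1) : ℝ) ≤ 2 * (d j : ℝ)) := by
  by_cases hpow : ∃ e, Q = 2^e
  · obtain ⟨e, rfl⟩ := hpow
    refine ⟨2^e, e, fun j => 2^j, by positivity, dvd_rfl, pow_zero 2, rfl,
      fun j hj => pow_dvd_pow 2 hj,
      fun j hj => Nat.pow_lt_pow_right (by norm_num) (by omega), ?_⟩
    intro j hj
    have hp : (0:ℝ) < (2:ℝ)^j := by positivity
    push_cast [pow_succ]
    constructor <;> nlinarith
  · have hQ3 : 3 ≤ Q := by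
      by_contra h
      interval_cases Q
      exacts [hpow ⟨0, rfl⟩, hpow ⟨1, rfl⟩]
    have hQR : (2:ℝ) < (Q:ℝ) := by exact_mod_cast (by omega : 2 < Q)
    have hQRpos : (0:ℝ) < (Q:ℝ) := by linarith
    set α := Real.logb 2 (Q:ℝ) with hαdef
    set β := Real.logb 2 lam with hβdef
    have h2Q : (2:ℝ) ^ α = (Q:ℝ) := Real.rpow_logb (by norm_num) (by norm_num) hQRpos
    have h2lam : (2:ℝ) ^ β = lam := Real.rpow_logb (by norm_num) (by norm_num) (by linarith)
    have hα : 1 < α := by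
      rw [show (1:ℝ) = Real.logb 2 2 by simp [Real.logb_self_eq_one]]
      exact Real.logb_lt_logb (by norm_num) (by norm_num) hQR
    have hβ0 : 0 < β := Real.logb_pos (by norm_num) hlam1
    have hβ1 : β < 1 := by
      rw [show (1:ℝ) = Real.logb 2 2 by simp [Real.logb_self_eq_one]]
      exact Real.logb_lt_logb (by norm_num) (by linarith) hlam2
    -- key rpow identity
    have hpowid : ∀ t : ℕ, (Q:ℝ) ^ t = (2:ℝ) ^ ((t:ℝ) * α) := by
      intro t
      rw [← h2Q, ← Real.rpow_natCast ((2:ℝ)^α) t, ← Real.rpow_mul (by norm_num), mul_comm]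
    have hirr : ∀ m : ℕ, 1 ≤ m → ∀ v : ℤ, (m : ℝ) * α ≠ (v : ℝ) := by
      intro m hm v heq
      have hm1 : (1:ℝ) ≤ (m:ℝ) := by exact_mod_cast hm
      have hv1 : (1:ℝ) < (v:ℝ) := by rw [← heq]; nlinarith
      have hv0 : 0 ≤ v := by
        have : (0:ℝ) < (v:ℝ) := by linarith
        exact_mod_cast this.le
      have hQm : (Q:ℝ) ^ m = (2:ℝ) ^ ((v:ℝ)) := by rw [hpowid m, heq]
      have hvℝ : ((v.toNat : ℕ) : ℝ) = (v:ℝ) := by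
        exact_mod_cast congrArg (Int.cast : ℤ → ℝ) (Int.toNat_of_nonneg hv0)
      have hQm' : (Q:ℝ) ^ m = ((2^(v.toNat) : ℕ) : ℝ) := by
        rw [hQm, ← hvℝ, Real.rpow_natCast]
        push_cast
        ring
      have hnat : Q ^ m = 2 ^ (v.toNat) := by exact_mod_cast hQm'
      have hdvd : Q ∣ 2 ^ (v.toNat) := hnat ▸ dvd_pow_self Q (by omega)
      obtain ⟨e, -, he⟩ := (Nat.dvd_prime_pow Nat.prime_two).mp hdvd
      exact hpow ⟨e, he⟩
    obtain ⟨s, v, hs, hb1, hb2⟩ := key_density α β hα hβ0 hβ1 hirr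
    have h2v : (2:ℝ) ^ ((v:ℝ)) = (2:ℝ) ^ v := Real.rpow_natCast 2 v
    have h1 : lam * (2:ℝ)^v ≤ (Q:ℝ)^s := by
      have : (2:ℝ) ^ (β + (v:ℝ)) ≤ (2:ℝ) ^ ((s:ℝ) * α) :=
        (Real.rpow_le_rpow_left_iff (by norm_num)).mpr (by linarith)
      rwa [Real.rpow_add (by norm_num), h2lam, h2v, ← hpowid s] at this
    have h2 : (Q:ℝ)^s ≤ 2 * (2:ℝ)^v := by
      have : (2:ℝ) ^ ((s:ℝ) * α) ≤ (2:ℝ) ^ (1 + (v:ℝ)) :=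
        (Real.rpow_le_rpow_left_iff (by norm_num)).mpr (by linarith)
      rwa [Real.rpow_add (by norm_num), Real.rpow_one, h2v, ← hpowid s] at this
    exact build_chain lam hlam1 hlam2 Q s v hQ hs h1 h2
end
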